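/- arXiv:2101.00413 — 7 statements merged into one kernel-verified Lean document; each statement's English description precedes it below -/
import Mathlib

section
/- Let O be a discrete valuation ring in which 2 is a unit, with fraction field E, and let σ : E → E be a ring automorphism with σ ≠ id, σ ∘ σ = id, and σ(O) = O. For a matrix g = (g_ij) over E write ḡ = (σ(g_ij)). Let J ∈ GL_{2n+1}(E) be the block matrix [[0,0,Id_n],[0,1,0],[Id_n,0,0]], let G = {g ∈ GL_{2n+1}(E) : ᵗḡ·J·g = J}, let 𝔓₀ = {diag(a, λ, ᵗā⁻¹) : a ∈ GL_n(O), λ ∈ O^×, λ·σ(λ) = 1} and Z(L) = {diag(a·Id_n, λ, σ(a)⁻¹·Id_n) : a ∈ E^×, λ ∈ E^×, λ·σ(λ) = 1}, all viewed as subgroups of G. Then the normalizer of 𝔓₀ in G equals (𝔓₀·Z(L)) ∪ (𝔓₀·Z(L))·J; that is, it is generated by 𝔓₀, Z(L) and J, and since J ∉ 𝔓₀·Z(L) and J² = 1, it is the internal semidirect product (𝔓₀·Z(L)) ⋊ ⟨J⟩. -/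
open Matrix
open scoped Pointwise

namespace Stmt0

variable (n : ℕ) (E : Type*) [Field E]

/-- The index type for `(2n+1) × (2n+1)` block matrices. -/
abbrev ι (n : ℕ) : Type := Fin n ⊕ (Unit ⊕ Fin n)

/-- The antidiagonal block matrix `J = [[0,0,Id_n],[0,1,0],[Id_n,0,0]]`. -/
def Jmat : Matrix (ι n) (ι n) E := fun i j =>
  match i, j with
  | Sum.inl i, Sum.inr (Sum.inr j) => if i = j then 1 else 0
  | Sum.inr (Sum.inl _), Sum.inr (Sum.inl _) => 1
  | Sum.inr (Sum.inr i), Sum.inl j => if i = j then 1 else 0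
  | _, _ => 0

/-- The block-diagonal matrix `diag(a, λ, c)`. -/
def diagBlock {n : ℕ} {E : Type*} [Field E]
    (a : Matrix (Fin n) (Fin n) E) (lam : E) (c : Matrix (Fin n) (Fin n) E) :
    Matrix (ι n) (ι n) E := fun i j =>
  match i, j with
  | Sum.inl i, Sum.inl j => a i j
  | Sum.inr (Sum.inl _), Sum.inr (Sum.inl _) => lam
  | Sum.inr (Sum.inr i), Sum.inr (Sum.inr j) => c i j
  | _, _ => 0

/-- The unitary group `G = U(n,n+1) = {g ∈ GL_{2n+1}(E) | ᵗḡ·J·g = J}`, where `bar` is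
the entrywise application of the automorphism `σ`. -/
def Gset (σ : E ≃+* E) : Set (Matrix (ι n) (ι n) E)ˣ :=
  {g | ((g : Matrix (ι n) (ι n) E).map σ)ᵀ * Jmat n E * (g : Matrix (ι n) (ι n) E)
        = Jmat n E}

/-- The subgroup `𝔓₀ = {diag(a, λ, ᵗā⁻¹) | a ∈ GL_n(O), λ ∈ O^×, λ·σ(λ) = 1}`. -/
def P0set (O : Subring E) (σ : E ≃+* E) : Set (Matrix (ι n) (ι n) E)ˣ :=
  {g | ∃ (a : Matrix (Fin n) (Fin n) E) (lam : E),
    (∀ i j, a i j ∈ O) ∧ IsUnit a.det ∧ (∀ i j, a⁻¹ i j ∈ O) ∧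
    lam ∈ O ∧ lam⁻¹ ∈ O ∧ lam * σ lam = 1 ∧
    (g : Matrix (ι n) (ι n) E) = diagBlock a lam ((a.map σ)ᵀ)⁻¹}

/-- The center `Z(L) = {diag(a·Id_n, λ, σ(a)⁻¹·Id_n) | a, λ ∈ E^×, λ·σ(λ) = 1}` of the
Siegel Levi subgroup. -/
def ZLset (σ : E ≃+* E) : Set (Matrix (ι n) (ι n) E)ˣ :=
  {g | ∃ a lam : E, a ≠ 0 ∧ lam * σ lam = 1 ∧
    (g : Matrix (ι n) (ι n) E)
      = diagBlock (a • (1 : Matrix (Fin n) (Fin n) E)) lam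
          ((σ a)⁻¹ • (1 : Matrix (Fin n) (Fin n) E))}

/-
The element `s = diag(u, 1, σ(u)⁻¹)`, for a unit `u ∈ O^×` with `u σ(u) ≠ 1` (one of `1 ± π`
works, `π` a uniformizer), is central in `𝔓₀` and has the three distinct eigenvalues
`u, 1, σ(u)⁻¹`. If `g ∈ G` normalizes `𝔓₀`, then `g s g⁻¹` is again central in `𝔓₀`; its first
block commutes with the elementary matrices `1 + e_ij`, which lie in `GL_n(O)` as `2 ∈ O^×`, so
`g s g⁻¹ ∈ Z(L)`, and comparing eigenvalues leaves `g s g⁻¹ = s` or `g s g⁻¹ = J s J`.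
Replacing `g` by `J g` in the second case, `g` commutes with `s`, hence is block diagonal,
`g = diag(A, λ, ᵗĀ⁻¹)`. Since `g` normalizes `𝔓₀`, every `A (1 + e_ij) A⁻¹` is integral, i.e.
`A_ki (A⁻¹)_jl ∈ O` for all indices; over the local ring `O` this makes `A` a scalar multiple
of an element of `GL_n(O)`, so `g ∈ 𝔓₀ · Z(L)`.
-/

section General

variable {E}

theorem apply_eq_zero_of_mul_diagonal_eq {m R : Type*} [Fintype m] [DecidableEq m] [CommRing R]
    [NoZeroDivisors R] {G : Matrix m m R} {d d' : m → R} (h : G * diagonal d = diagonal d' * G)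
    {x y : m} (hxy : d' x ≠ d y) :
    G x y = 0 := by
  have hxy' := congr_fun₂ h x y
  rw [mul_diagonal, diagonal_mul] at hxy'
  have : G x y * (d y - d' x) = 0 := by linear_combination hxy'
  exact (mul_eq_zero.mp this).resolve_right (sub_ne_zero.mpr hxy.symm)

theorem exists_eq_of_mul_diagonal_eq {m R : Type*} [Fintype m] [DecidableEq m] [CommRing R]
    [IsDomain R] {G : Matrix m m R} {d d' : m → R} (hG : IsUnit G.det)
    (h : G * diagonal d = diagonal d' * G) (x : m) :
    ∃ y, d' x = d y := by
  by_contra! hne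
  exact hG.ne_zero
    (det_eq_zero_of_row_eq_zero x fun y => apply_eq_zero_of_mul_diagonal_eq h (hne y))

theorem map_nonsing_inv {m : Type*} [Fintype m] [DecidableEq m] (σ : E ≃+* E)
    (A : Matrix m m E) : A⁻¹.map σ = (A.map σ)⁻¹ := by
  rw [inv_def, inv_def]
  ext i j
  have := congr_fun₂ ((σ : E →+* E).map_adjugate A) i j
  simp_all [RingEquiv.map_det]

theorem inv_smul_one {m : Type*} [Fintype m] [DecidableEq m] (x : E) :
    (x • (1 : Matrix m m E))⁻¹ = x⁻¹ • 1 := by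
  rcases eq_or_ne x 0 with rfl | hx
  · simp
  exact inv_eq_right_inv (by simp [smul_smul, hx])

theorem one_add_single_mul_one_sub_single {m : Type*} [Fintype m] [DecidableEq m]
    (h2 : (2 : E) ≠ 0) (i j : m) :
    (1 + single i j (1 : E)) * (1 - single i j (if i = j then 2⁻¹ else 1)) = 1 := by
  rcases eq_or_ne i j with rfl | hij
  · simp only [if_pos, mul_sub, add_mul, one_mul, mul_one, single_mul_single_same]
    rw [← single_add, ← two_mul, mul_inv_cancel₀ h2, add_sub_cancel_right]
  · have hsq : single i j (1 : E) * single i j 1 = 0 :=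
      single_mul_single_of_ne (1 : E) i j i hij.symm 1
    simp [mul_sub, add_mul, hij, hsq]

theorem mul_single_mul_apply {m : Type*} [Fintype m] [DecidableEq m] (A B : Matrix m m E)
    (i j k l : m) : (A * single i j (1 : E) * B) k l = A k i * B j l := by
  simp [mul_apply, single, ite_and, Finset.sum_ite_eq, ite_mul]

theorem exists_unit_mul_map_ne_one (O : Subring E) [IsLocalRing O] (h2 : (2 : E) ≠ 0) {π : O}
    (hπ0 : π ≠ 0) (hπ : ¬IsUnit π) (σ : E →+* E) : ∃ u : Oˣ, (u : E) * σ u ≠ 1 := by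
  -- Otherwise `1 + π` and `1 - π` both satisfy `u σ(u) = 1`, which forces `π² = 0`.
  by_contra! h
  have hplus := h (IsLocalRing.isUnit_one_sub_self_of_mem_nonunits (-π) (by simpa using hπ)).unit
  have hminus := h (IsLocalRing.isUnit_one_sub_self_of_mem_nonunits π hπ).unit
  simp only [IsUnit.unit_spec, sub_neg_eq_add] at hplus hminus
  push_cast at hplus hminus
  simp only [map_add, map_sub, map_one] at hplus hminus
  set p : E := (π : E)
  have hpq : p * σ p = 0 := by
    have : 2 * (p * σ p) = 0 := by linear_combination hplus + hminus
    simpa [h2] using this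
  have : p * p = 0 := by linear_combination p * hplus - (1 + p) * hpq
  exact hπ0 (by simpa [p] using this)

theorem exists_smul_of_mul_inv_apply_mem {m : Type*} [Fintype m] [DecidableEq m] [Nonempty m]
    (O : Subring E) [IsLocalRing O] {A : Matrix m m E} (hA : IsUnit A.det)
    (hF : ∀ i j k l, A k i * A⁻¹ j l ∈ O) :
    ∃ α : E, α ≠ 0 ∧ ∃ a : Matrix m m E, (∀ i j, a i j ∈ O) ∧ IsUnit a.det ∧
      (∀ i j, a⁻¹ i j ∈ O) ∧ A = α • a := by
  obtain ⟨i₀⟩ := ‹Nonempty m›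
  have hsum : ∑ k, (⟨A i₀ k * A⁻¹ k i₀, hF k k i₀ i₀⟩ : O) = 1 := by
    ext
    simpa [mul_apply, one_apply] using congr_fun₂ (mul_nonsing_inv A hA) i₀ i₀
  -- Some summand of `∑ k, A i₀ k * A⁻¹ k i₀ = 1` is a unit of `O`; its first factor is the scale.
  obtain ⟨k, -, hk⟩ := IsLocalRing.exists_of_isUnit_sum (hsum ▸ isUnit_one)
  set α := A i₀ k
  obtain ⟨w, hw⟩ := hk.exists_right_inv
  have hw' : α * A⁻¹ k i₀ * w = 1 := by simpa using congr_arg Subtype.val hw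
  have hα : α ≠ 0 := by rintro h; simp [h] at hw'
  have hαinv : α⁻¹ = A⁻¹ k i₀ * w := by
    rw [inv_eq_of_mul_eq_one_right (by rw [← hw', mul_assoc])]
  have hinv : (α⁻¹ • A)⁻¹ = α • A⁻¹ :=
    inv_eq_right_inv <| by
      rw [smul_mul_smul_comm, inv_mul_cancel₀ hα, mul_nonsing_inv _ hA, one_smul]
  refine ⟨α, hα, α⁻¹ • A, fun i j => ?_, ?_, fun i j => ?_, ?_⟩
  · rw [Matrix.smul_apply, smul_eq_mul, hαinv, mul_comm, ← mul_assoc]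
    exact O.mul_mem (hF j k i i₀) w.2
  · simpa [det_smul, hα] using hA
  · rw [hinv, Matrix.smul_apply, smul_eq_mul]
    exact hF k i i₀ j
  · rw [smul_smul, mul_inv_cancel₀ hα, one_smul]

variable {O : Subring E}

theorem smul_one_apply_mem {m : Type*} [DecidableEq m] {x : E} (hx : x ∈ O) (i j : m) :
    (x • (1 : Matrix m m E)) i j ∈ O := by
  rw [Matrix.smul_apply, one_apply]
  split_ifs <;> simp [hx]

theorem mul_apply_mem {m : Type*} [Fintype m] {A B : Matrix m m E} (hA : ∀ i j, A i j ∈ O)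
    (hB : ∀ i j, B i j ∈ O) (i j : m) : (A * B) i j ∈ O :=
  O.sum_mem fun k _ => O.mul_mem (hA i k) (hB k j)

theorem coe_two : ((2 : O) : E) = 2 := map_ofNat O.subtype 2

theorem two_ne_zero_of_isUnit (h2 : IsUnit (2 : O)) : (2 : E) ≠ 0 := by
  rw [← coe_two]
  exact_mod_cast h2.ne_zero

theorem inv_mem_of_isUnit {x : O} (hx : IsUnit x) : (x : E)⁻¹ ∈ O := by
  obtain ⟨w, hw⟩ := hx.exists_right_inv
  rw [inv_eq_of_mul_eq_one_right (by simpa using congr_arg Subtype.val hw)]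
  exact w.2

end General

section Blocks

variable {n E}

theorem diagBlock_eq_fromBlocks (a c : Matrix (Fin n) (Fin n) E) (l : E) :
    diagBlock a l c = fromBlocks a 0 0 (fromBlocks (of fun _ _ => l) 0 0 c) := by
  ext (i | i | i) (j | j | j) <;> rfl

theorem diagBlock_mul (a a' c c' : Matrix (Fin n) (Fin n) E) (l l' : E) :
    diagBlock a l c * diagBlock a' l' c' = diagBlock (a * a') (l * l') (c * c') := by
  simp only [diagBlock_eq_fromBlocks, fromBlocks_multiply]
  ext (i | i | i) (j | j | j) <;> simp [mul_apply]

theorem diagBlock_one : diagBlock (1 : Matrix (Fin n) (Fin n) E) 1 1 = 1 := by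
  simp only [diagBlock_eq_fromBlocks, ← fromBlocks_one]
  ext (i | i | i) (j | j | j) <;> simp [one_apply]

theorem diagBlock_inj {a a' c c' : Matrix (Fin n) (Fin n) E} {l l' : E} :
    diagBlock a l c = diagBlock a' l' c' ↔ a = a' ∧ l = l' ∧ c = c' := by
  simp [diagBlock_eq_fromBlocks, fromBlocks_inj, funext_iff]

theorem diagBlock_eq_one_iff {a c : Matrix (Fin n) (Fin n) E} {l : E} :
    diagBlock a l c = 1 ↔ a = 1 ∧ l = 1 ∧ c = 1 := by
  rw [← diagBlock_one, diagBlock_inj]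

theorem transpose_diagBlock (a c : Matrix (Fin n) (Fin n) E) (l : E) :
    (diagBlock a l c)ᵀ = diagBlock aᵀ l cᵀ := by
  simp only [diagBlock_eq_fromBlocks, fromBlocks_transpose]
  ext (i | i | i) (j | j | j) <;> simp

theorem map_diagBlock {f : E → E} (hf : f 0 = 0) (a c : Matrix (Fin n) (Fin n) E) (l : E) :
    (diagBlock a l c).map f = diagBlock (a.map f) (f l) (c.map f) := by
  simp only [diagBlock_eq_fromBlocks, fromBlocks_map]
  ext (i | i | i) (j | j | j) <;> simp [hf]

theorem det_diagBlock (a c : Matrix (Fin n) (Fin n) E) (l : E) :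
    (diagBlock a l c).det = a.det * l * c.det := by
  rw [diagBlock_eq_fromBlocks, det_fromBlocks_zero₂₁, det_fromBlocks_zero₂₁,
    det_unique (of fun _ _ => l : Matrix Unit Unit E), mul_assoc]
  rfl

theorem isUnit_of_coe_eq_diagBlock {g : (Matrix (ι n) (ι n) E)ˣ} {a c : Matrix (Fin n) (Fin n) E}
    {l : E} (hg : (g : Matrix (ι n) (ι n) E) = diagBlock a l c) :
    IsUnit a.det ∧ IsUnit l ∧ IsUnit c.det := by
  have hdet : IsUnit (a.det * l * c.det) := by
    rw [← det_diagBlock, ← hg]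
    exact (isUnit_iff_isUnit_det _).mp g.isUnit
  simpa only [IsUnit.mul_iff, and_assoc] using hdet

theorem coe_inv_eq_diagBlock {g : (Matrix (ι n) (ι n) E)ˣ} {a c : Matrix (Fin n) (Fin n) E}
    {l : E} (hg : (g : Matrix (ι n) (ι n) E) = diagBlock a l c) :
    (↑g⁻¹ : Matrix (ι n) (ι n) E) = diagBlock a⁻¹ l⁻¹ c⁻¹ := by
  obtain ⟨ha, hl, hc⟩ := isUnit_of_coe_eq_diagBlock hg
  rw [coe_units_inv, hg]
  refine inv_eq_right_inv ?_
  rw [diagBlock_mul, mul_nonsing_inv _ ha, mul_inv_cancel₀ hl.ne_zero, mul_nonsing_inv _ hc,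
    diagBlock_one]

theorem exists_coe_eq_diagBlock {a c : Matrix (Fin n) (Fin n) E} {l : E} (ha : IsUnit a.det)
    (hl : l ≠ 0) (hc : IsUnit c.det) :
    ∃ g : (Matrix (ι n) (ι n) E)ˣ, (g : Matrix (ι n) (ι n) E) = diagBlock a l c :=
  ⟨nonsingInvUnit (diagBlock a l c) (by rw [det_diagBlock]; exact (ha.mul hl.isUnit).mul hc), rfl⟩

theorem diagBlock_smul_one (x y z : E) :
    diagBlock (x • (1 : Matrix (Fin n) (Fin n) E)) y (z • 1) =
      diagonal (Sum.elim (fun _ => x) (Sum.elim (fun _ => y) (fun _ => z))) := by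
  ext (i | i | i) (j | j | j) <;> simp [diagBlock, one_apply, diagonal_apply]

theorem diagBlock_smul_one_commute (x y z : E) (a c : Matrix (Fin n) (Fin n) E) (l : E) :
    Commute (diagBlock (x • 1) y (z • 1)) (diagBlock a l c) := by
  simp [Commute, SemiconjBy, diagBlock_mul, mul_comm y l]

theorem eq_diagBlock_of_commute {x y z : E} (hxy : x ≠ y) (hxz : x ≠ z) (hyz : y ≠ z)
    {G : Matrix (ι n) (ι n) E}
    (h : G * diagBlock (x • 1) y (z • 1) = diagBlock (x • 1) y (z • 1) * G) :
    ∃ A l C, G = diagBlock A l C := by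
  rw [diagBlock_smul_one] at h
  refine ⟨fun i j => G (.inl i) (.inl j), G (.inr (.inl ())) (.inr (.inl ())),
    fun i j => G (.inr (.inr i)) (.inr (.inr j)), ?_⟩
  ext (i | i | i) (j | j | j)
  all_goals first
    | rfl
    | exact apply_eq_zero_of_mul_diagonal_eq h
        (by simp [hxy, hxz, hyz, hxy.symm, hxz.symm, hyz.symm])

theorem Jmat_mul_Jmat : Jmat n E * Jmat n E = 1 := by
  ext (i | i | i) (j | j | j) <;>
    simp [Jmat, mul_apply, Fintype.sum_sum_type, one_apply, eq_comm]

theorem Jmat_mul_diagBlock (a c : Matrix (Fin n) (Fin n) E) (l : E) :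
    Jmat n E * diagBlock a l c = diagBlock c l a * Jmat n E := by
  ext (i | i | i) (j | j | j) <;> simp [Jmat, diagBlock, mul_apply, Fintype.sum_sum_type]

theorem transpose_Jmat : (Jmat n E)ᵀ = Jmat n E := by
  ext (i | i | i) (j | j | j) <;> simp [Jmat, eq_comm]

theorem map_Jmat (σ : E ≃+* E) : (Jmat n E).map σ = Jmat n E := by
  ext (i | i | i) (j | j | j) <;> simp [Jmat, apply_ite σ]

theorem mul_Jmat_eq_Jmat_iff {M : Matrix (ι n) (ι n) E} : M * Jmat n E = Jmat n E ↔ M = 1 := by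
  refine ⟨fun h => ?_, fun h => by rw [h, Matrix.one_mul]⟩
  rw [← Matrix.mul_one M, ← Jmat_mul_Jmat, ← Matrix.mul_assoc, h, Jmat_mul_Jmat]

theorem diagBlock_ne_Jmat [NeZero n] (a c : Matrix (Fin n) (Fin n) E) (l : E) :
    diagBlock a l c ≠ Jmat n E := fun h => by
  simpa [diagBlock, Jmat] using congr_fun₂ h (.inl 0) (.inr (.inr 0))

end Blocks

section Unitary

variable {n E} (σ : E ≃+* E)

theorem unitary_diagBlock_iff (a c : Matrix (Fin n) (Fin n) E) (l : E) :
    ((diagBlock a l c).map σ)ᵀ * Jmat n E * diagBlock a l c = Jmat n E ↔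
      (a.map σ)ᵀ * c = 1 ∧ σ l * l = 1 ∧ (c.map σ)ᵀ * a = 1 := by
  rw [map_diagBlock (map_zero σ), transpose_diagBlock, Matrix.mul_assoc, Jmat_mul_diagBlock,
    ← Matrix.mul_assoc, diagBlock_mul, mul_Jmat_eq_Jmat_iff, diagBlock_eq_one_iff]

theorem unitary_mul (g h : Matrix (ι n) (ι n) E) :
    ((g * h).map σ)ᵀ * Jmat n E * (g * h) = (h.map σ)ᵀ * ((g.map σ)ᵀ * Jmat n E * g) * h := by
  simp only [Matrix.map_mul, transpose_mul, Matrix.mul_assoc]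

variable (n E) in
def unitarySubgroup : Subgroup (Matrix (ι n) (ι n) E)ˣ where
  carrier := Gset n E σ
  one_mem' := by simp [Gset]
  mul_mem' {g h} hg hh := by
    change _ = _ at hg hh ⊢
    rw [Units.val_mul, unitary_mul, hg, hh]
  inv_mem' {g} hg := by
    change _ = _ at hg ⊢
    have := unitary_mul σ (g : Matrix (ι n) (ι n) E) ↑g⁻¹
    rwa [hg, Units.mul_inv, Matrix.map_one _ (map_zero σ) (map_one σ), transpose_one,
      Matrix.one_mul, Matrix.mul_one, eq_comm] at this

variable (n E) in
def Ju : (Matrix (ι n) (ι n) E)ˣ := ⟨Jmat n E, Jmat n E, Jmat_mul_Jmat, Jmat_mul_Jmat⟩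

@[simp]
theorem coe_Ju : (Ju n E : Matrix (ι n) (ι n) E) = Jmat n E := rfl

theorem Ju_inv : (Ju n E)⁻¹ = Ju n E := rfl

theorem Ju_mul_Ju : Ju n E * Ju n E = 1 := Units.ext Jmat_mul_Jmat

theorem Ju_mul_Ju_mul (x : (Matrix (ι n) (ι n) E)ˣ) : Ju n E * (Ju n E * x) = x := by
  rw [← mul_assoc, Ju_mul_Ju, one_mul]

theorem Ju_mem_unitarySubgroup : Ju n E ∈ unitarySubgroup n E σ := by
  show _ = _
  rw [coe_Ju, map_Jmat, transpose_Jmat, Matrix.mul_assoc, Jmat_mul_Jmat, Matrix.mul_one]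

end Unitary

section Levi

variable {n E} {O : Subring E} {σ : E ≃+* E}

theorem transpose_map_inv_transpose_map (hσ2 : ∀ x, σ (σ x) = x)
    (a : Matrix (Fin n) (Fin n) E) : ((((a.map σ)ᵀ)⁻¹).map σ)ᵀ = a⁻¹ := by
  rw [← transpose_nonsing_inv, transpose_map, transpose_transpose, map_nonsing_inv,
    Matrix.map_map]
  congr
  ext i j
  exact hσ2 _

theorem transpose_map_smul_one_inv (x : E) :
    ((((x • 1 : Matrix (Fin n) (Fin n) E)).map σ)ᵀ)⁻¹ = (σ x)⁻¹ • 1 := by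
  rw [smul_one_eq_diagonal, diagonal_map (map_zero σ), diagonal_transpose, ← smul_one_eq_diagonal,
    inv_smul_one]

theorem isUnit_det_transpose_map {a : Matrix (Fin n) (Fin n) E} (ha : IsUnit a.det) :
    IsUnit (a.map σ)ᵀ.det := by
  rw [det_transpose, ← RingEquiv.mapMatrix_apply, ← RingEquiv.map_det]
  exact ha.map σ

variable (n E O σ) in
def P0subgroup : Subgroup (Matrix (ι n) (ι n) E)ˣ where
  carrier := P0set n E O σ
  one_mem' := ⟨1, 1, fun i j => by simp only [one_apply]; split_ifs <;> simp, by simp,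
    fun i j => by simp only [inv_one, one_apply]; split_ifs <;> simp, O.one_mem,
    by simp, by simp, by simp [diagBlock_one]⟩
  mul_mem' := by
    rintro p q ⟨a, l, ha, hadet, ha', hl, hl', hll, hp⟩ ⟨b, m, hb, hbdet, hb', hm, hm', hmm, hq⟩
    refine ⟨a * b, l * m, mul_apply_mem ha hb, by simpa using hadet.mul hbdet, ?_,
      O.mul_mem hl hm, by simpa [mul_inv, mul_comm] using O.mul_mem hl' hm', ?_, ?_⟩
    · simpa [Matrix.mul_inv_rev] using mul_apply_mem hb' ha'
    · rw [map_mul]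
      linear_combination m * σ m * hll + hmm
    · rw [Units.val_mul, hp, hq, diagBlock_mul, Matrix.map_mul, transpose_mul, Matrix.mul_inv_rev]
  inv_mem' := by
    rintro p ⟨a, l, ha, hadet, ha', hl, hl', hll, hp⟩
    refine ⟨a⁻¹, l⁻¹, ha', isUnit_nonsing_inv_det _ hadet,
      by simpa [nonsing_inv_nonsing_inv _ hadet] using ha, hl', by simpa using hl, ?_, ?_⟩
    · rw [map_inv₀, ← mul_inv, hll, inv_one]
    · rw [coe_inv_eq_diagBlock hp, map_nonsing_inv, transpose_nonsing_inv]

theorem exists_mem_P0set_coe_eq {a : Matrix (Fin n) (Fin n) E} (ha : ∀ i j, a i j ∈ O)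
    (hadet : IsUnit a.det) (ha' : ∀ i j, a⁻¹ i j ∈ O) :
    ∃ p ∈ P0set n E O σ, (p : Matrix (ι n) (ι n) E) = diagBlock a 1 ((a.map σ)ᵀ)⁻¹ := by
  obtain ⟨p, hp⟩ := exists_coe_eq_diagBlock hadet one_ne_zero
    (isUnit_nonsing_inv_det _ (isUnit_det_transpose_map (σ := σ) hadet))
  exact ⟨p, ⟨a, 1, ha, hadet, ha', O.one_mem, by simp, by simp, hp⟩, hp⟩

theorem exists_mem_P0set_coe_eq_one_add_single (h2 : IsUnit (2 : O)) (i j : Fin n) :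
    ∃ p ∈ P0set n E O σ, (p : Matrix (ι n) (ι n) E) =
      diagBlock (1 + single i j 1) 1 (((1 + single i j (1 : E)).map σ)ᵀ)⁻¹ := by
  have hinv := one_add_single_mul_one_sub_single (two_ne_zero_of_isUnit h2) i j
  have hmem : ∀ (c : E), c ∈ O → ∀ k l, (1 + single i j c) k l ∈ O := fun c hc k l => by
    simp only [Matrix.add_apply, one_apply, single_apply]
    split_ifs <;> simp [hc, O.one_mem, O.add_mem]
  refine exists_mem_P0set_coe_eq (hmem 1 O.one_mem) (isUnit_det_of_right_inverse hinv) ?_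
  rw [inv_eq_right_inv hinv, sub_eq_add_neg, single_neg]
  refine hmem _ (O.neg_mem ?_)
  split_ifs
  · exact (coe_two (O := O)) ▸ inv_mem_of_isUnit h2
  · exact O.one_mem

theorem P0set_subset_unitarySubgroup (hσ2 : ∀ x, σ (σ x) = x) :
    P0set n E O σ ⊆ unitarySubgroup n E σ := by
  rintro p ⟨a, l, -, hadet, -, -, -, hll, hp⟩
  change _ = _
  rw [hp, unitary_diagBlock_iff, transpose_map_inv_transpose_map hσ2,
    mul_nonsing_inv _ (isUnit_det_transpose_map hadet), mul_comm,
    nonsing_inv_mul _ hadet]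
  exact ⟨rfl, hll, rfl⟩

theorem ZLset_subset_unitarySubgroup (hσ2 : ∀ x, σ (σ x) = x) :
    ZLset n E σ ⊆ unitarySubgroup n E σ := by
  rintro z ⟨a, l, ha, hll, hz⟩
  change _ = _
  have hσa : σ a ≠ 0 := by simpa using ha
  rw [hz, unitary_diagBlock_iff]
  refine ⟨?_, by rw [mul_comm, hll], ?_⟩ <;> simp [smul_one_eq_diagonal, hσ2, ha, hσa]

theorem ZLset_subset_centralizer : ZLset n E σ ⊆ Subgroup.centralizer (P0set n E O σ) := by
  rintro z ⟨x, y, -, -, hz⟩ p ⟨a, l, -, -, -, -, -, -, hp⟩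
  ext1
  simp only [Units.val_mul, hz, hp]
  exact (diagBlock_smul_one_commute _ _ _ _ _ _).symm

theorem coe_ne_Jmat_of_mem_P0set_mul_ZLset [NeZero n]
    {h : (Matrix (ι n) (ι n) E)ˣ} (hh : h ∈ P0set n E O σ * ZLset n E σ) :
    (h : Matrix (ι n) (ι n) E) ≠ Jmat n E := by
  obtain ⟨p, ⟨a, l, -, -, -, -, -, -, hp⟩, z, ⟨x, y, -, -, hz⟩, rfl⟩ := hh
  rw [Units.val_mul, hp, hz, diagBlock_mul]
  exact diagBlock_ne_Jmat _ _ _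

theorem Ju_mul_mul_Ju_mem_P0set (hσ2 : ∀ x, σ (σ x) = x) (hσO : σ '' (O : Set E) = O)
    {p : (Matrix (ι n) (ι n) E)ˣ} (hp : p ∈ P0set n E O σ) :
    Ju n E * p * Ju n E ∈ P0set n E O σ := by
  obtain ⟨a, l, ha, hadet, ha', hl, hl', hll, hp⟩ := hp
  have hσmem : ∀ x ∈ O, σ x ∈ O := fun x hx => by
    rw [← SetLike.mem_coe, ← hσO]
    exact Set.mem_image_of_mem σ hx
  have hdet := isUnit_det_transpose_map (σ := σ) hadet
  refine ⟨((a.map σ)ᵀ)⁻¹, l, fun i j => ?_, isUnit_nonsing_inv_det _ hdet, fun i j => ?_,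
    hl, hl', hll, ?_⟩
  · rw [← transpose_nonsing_inv, ← map_nonsing_inv]
    exact hσmem _ (ha' j i)
  · rw [nonsing_inv_nonsing_inv _ hdet]
    exact hσmem _ (ha j i)
  · rw [Units.val_mul, Units.val_mul, coe_Ju, hp, Jmat_mul_diagBlock, Matrix.mul_assoc,
      Jmat_mul_Jmat, Matrix.mul_one, transpose_map_inv_transpose_map hσ2,
      nonsing_inv_nonsing_inv _ hadet]

theorem Ju_mem_normalizer (hσ2 : ∀ x, σ (σ x) = x) (hσO : σ '' (O : Set E) = O) :
    Ju n E ∈ Subgroup.normalizer (P0set n E O σ) := by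
  intro p
  rw [Ju_inv]
  refine ⟨Ju_mul_mul_Ju_mem_P0set hσ2 hσO, fun hp => ?_⟩
  have hJJ : Ju n E * (Ju n E * p * Ju n E) * Ju n E = p := by
    simp only [mul_assoc, Ju_mul_Ju_mul, Ju_mul_Ju, mul_one]
  simpa only [hJJ] using Ju_mul_mul_Ju_mem_P0set hσ2 hσO hp

theorem Ju_mul_mul_Ju_mem_ZLset (hσ2 : ∀ x, σ (σ x) = x) {z : (Matrix (ι n) (ι n) E)ˣ}
    (hz : z ∈ ZLset n E σ) : Ju n E * z * Ju n E ∈ ZLset n E σ := by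
  obtain ⟨a, l, ha, hll, hz⟩ := hz
  refine ⟨(σ a)⁻¹, l, by simpa using ha, hll, ?_⟩
  rw [Units.val_mul, Units.val_mul, coe_Ju, hz, Jmat_mul_diagBlock, Matrix.mul_assoc,
    Jmat_mul_Jmat, Matrix.mul_one, map_inv₀, hσ2, inv_inv]

variable (n E O σ) in
def P0normalizer : Subgroup (Matrix (ι n) (ι n) E)ˣ :=
  unitarySubgroup n E σ ⊓ Subgroup.normalizer (P0set n E O σ)

theorem P0set_mul_ZLset_subset_P0normalizer (hσ2 : ∀ x, σ (σ x) = x) :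
    P0set n E O σ * ZLset n E σ ⊆ P0normalizer n E O σ := by
  rintro _ ⟨p, hp, z, hz, rfl⟩
  exact (P0normalizer n E O σ).mul_mem
    ⟨P0set_subset_unitarySubgroup hσ2 hp, Subgroup.le_normalizer (H := P0subgroup n E O σ) hp⟩
    ⟨ZLset_subset_unitarySubgroup hσ2 hz,
      Subgroup.centralizer_le_normalizer _ (ZLset_subset_centralizer hz)⟩

theorem Ju_mem_P0normalizer (hσ2 : ∀ x, σ (σ x) = x) (hσO : σ '' (O : Set E) = O) :
    Ju n E ∈ P0normalizer n E O σ :=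
  ⟨Ju_mem_unitarySubgroup σ, Ju_mem_normalizer hσ2 hσO⟩

end Levi

section Normalizer

variable {n E} {O : Subring E} {σ : E ≃+* E}

theorem mem_ZLset_of_mem_centralizer [NeZero n] (h2 : IsUnit (2 : O))
    {p : (Matrix (ι n) (ι n) E)ˣ} (hp : p ∈ P0set n E O σ)
    (hc : p ∈ Subgroup.centralizer (P0set n E O σ)) : p ∈ ZLset n E σ := by
  obtain ⟨b, μ, -, hbdet, -, -, -, hμ, hp⟩ := hp
  -- The first block commutes with every `1 + e_ij ∈ GL_n(O)`, hence is scalar.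
  have hcomm : Pairwise fun i j => Commute (single i j (1 : E)) b := by
    intro i j _
    obtain ⟨q, hq, hqv⟩ := exists_mem_P0set_coe_eq_one_add_single (σ := σ) h2 i j
    have := congr_arg Units.val (hc q hq)
    rw [Units.val_mul, Units.val_mul, hqv, hp, diagBlock_mul, diagBlock_mul, diagBlock_inj] at this
    simpa [Commute, SemiconjBy, add_mul, mul_add] using this.1
  obtain ⟨β, hβ⟩ := mem_range_scalar_of_commute_single hcomm
  rw [scalar_apply, ← smul_one_eq_diagonal] at hβ
  subst hβ
  refine ⟨β, μ, fun h => ?_, hμ, by rw [hp, transpose_map_smul_one_inv]⟩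
  simp [h] at hbdet

theorem eq_one_and_eq_or_eq_of_conj [NeZero n] (hσ2 : ∀ x, σ (σ x) = x) {u β μ : E}
    (hu : u * σ u ≠ 1) (hμ : μ * σ μ = 1) {G : Matrix (ι n) (ι n) E} (hG : IsUnit G)
    (h : G * diagBlock (u • 1) 1 ((σ u)⁻¹ • 1) = diagBlock (β • 1) μ ((σ β)⁻¹ • 1) * G) :
    μ = 1 ∧ (β = u ∨ β = (σ u)⁻¹) := by
  -- Both sides have the same eigenvalues: `μ σ(μ) = 1` excludes `μ ∈ {u, σ(u)⁻¹}`, and `β = 1`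
  -- would force `diag(u, 1, σ(u)⁻¹) = 1`.
  have hd := h
  rw [diagBlock_smul_one, diagBlock_smul_one] at hd
  have hGdet := (isUnit_iff_isUnit_det G).mp hG
  have hμ1 : μ = 1 := by
    obtain ⟨y, hy⟩ := exists_eq_of_mul_diagonal_eq hGdet hd (.inr (.inl ()))
    rcases y with y | y | y <;> simp only [Sum.elim_inl, Sum.elim_inr] at hy
    · exact absurd (hy ▸ hμ) hu
    · exact hy
    · rw [hy, map_inv₀, hσ2, ← mul_inv, inv_eq_one, mul_comm] at hμ
      exact absurd hμ hu
  subst hμ1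
  obtain ⟨y, hy⟩ := exists_eq_of_mul_diagonal_eq hGdet hd (.inl 0)
  rcases y with y | y | y <;> simp only [Sum.elim_inl, Sum.elim_inr] at hy
  · exact ⟨rfl, .inl hy⟩
  · subst hy
    have hs : G * diagBlock (u • 1) 1 ((σ u)⁻¹ • 1) = G * 1 := by
      rw [h, map_one, inv_one, one_smul, diagBlock_one, Matrix.one_mul, Matrix.mul_one]
    obtain ⟨hu1, -⟩ := diagBlock_eq_one_iff.mp (hG.mul_left_cancel hs)
    have : u = 1 := by simpa using congr_fun₂ hu1 0 0
    simp [this] at hu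
  · exact ⟨rfl, .inr hy⟩

theorem mul_inv_apply_mem_of_mem_normalizer (h2 : IsUnit (2 : O)) {g : (Matrix (ι n) (ι n) E)ˣ}
    (hN : g ∈ Subgroup.normalizer (P0set n E O σ)) {A C : Matrix (Fin n) (Fin n) E} {l : E}
    (hg : (g : Matrix (ι n) (ι n) E) = diagBlock A l C) (i j k l' : Fin n) :
    A k i * A⁻¹ j l' ∈ O := by
  -- `A (1 + e_ij) A⁻¹ = 1 + A e_ij A⁻¹` is the first block of an element of `𝔓₀`.
  obtain ⟨q, hq, hqv⟩ := exists_mem_P0set_coe_eq_one_add_single (σ := σ) h2 i j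
  obtain ⟨b, μ, hb, -, -, -, -, -, hbv⟩ := (hN q).mp hq
  rw [Units.val_mul, Units.val_mul, coe_inv_eq_diagBlock hg, hg, hqv, diagBlock_mul,
    diagBlock_mul, diagBlock_inj, mul_add, add_mul, mul_one,
    mul_nonsing_inv _ (isUnit_of_coe_eq_diagBlock hg).1] at hbv
  have := hb k l'
  rw [← hbv.1, Matrix.add_apply, mul_single_mul_apply] at this
  simpa [one_apply] using O.sub_mem this (show (1 : Matrix (Fin n) (Fin n) E) k l' ∈ O by
    rw [one_apply]; split_ifs <;> simp [O.one_mem, O.zero_mem])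

theorem mem_P0set_mul_ZLset_of_coe_eq_diagBlock [IsLocalRing O] [NeZero n]
    (h2 : IsUnit (2 : O)) {g : (Matrix (ι n) (ι n) E)ˣ}
    (hg : g ∈ P0normalizer n E O σ) {A C : Matrix (Fin n) (Fin n) E} {l : E}
    (hgv : (g : Matrix (ι n) (ι n) E) = diagBlock A l C) :
    g ∈ P0set n E O σ * ZLset n E σ := by
  have hu : _ = _ := hg.1
  rw [hgv, unitary_diagBlock_iff] at hu
  obtain ⟨hAC, hl, -⟩ := hu
  obtain ⟨α, hα, a, ha, hadet, ha', rfl⟩ := exists_smul_of_mul_inv_apply_mem O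
    (isUnit_of_coe_eq_diagBlock hgv).1 (mul_inv_apply_mem_of_mem_normalizer h2 hg.2 hgv)
  obtain ⟨p, hp, hpv⟩ := exists_mem_P0set_coe_eq (σ := σ) ha hadet ha'
  have hαa : α • a = a * (α • 1) := by rw [mul_smul_comm, mul_one]
  obtain ⟨z, hzv⟩ := exists_coe_eq_diagBlock (n := n) (a := α • 1) (l := l) (c := (σ α)⁻¹ • 1)
    (by simp [hα]) (right_ne_zero_of_mul_eq_one hl) (by simp [hα])
  refine ⟨p, hp, z, ⟨α, l, hα, by rwa [mul_comm], hzv⟩, Units.ext ?_⟩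
  rw [Units.val_mul, hpv, hzv, hgv, diagBlock_mul, ← inv_eq_right_inv hAC, hαa, Matrix.map_mul,
    transpose_mul, Matrix.mul_inv_rev, transpose_map_smul_one_inv, one_mul]

theorem mem_P0set_mul_ZLset_of_commute [IsLocalRing O] [NeZero n] (h2 : IsUnit (2 : O))
    {u : E} (hu0 : u ≠ 0) (hu : u * σ u ≠ 1) {g : (Matrix (ι n) (ι n) E)ˣ}
    (hg : g ∈ P0normalizer n E O σ)
    (hcomm : (g : Matrix (ι n) (ι n) E) * diagBlock (u • 1) 1 ((σ u)⁻¹ • 1) =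
      diagBlock (u • 1) 1 ((σ u)⁻¹ • 1) * (g : Matrix (ι n) (ι n) E)) :
    g ∈ P0set n E O σ * ZLset n E σ := by
  have hu1 : u ≠ 1 := by rintro rfl; simp at hu
  have hσu : (σ u)⁻¹ ≠ 1 := by simpa using hu1
  have huσu : u ≠ (σ u)⁻¹ := fun h => hu <| by
    nth_rewrite 1 [h]
    exact inv_mul_cancel₀ (by simpa using hu0)
  obtain ⟨A, l, C, hgv⟩ := eq_diagBlock_of_commute hu1 huσu hσu.symm hcomm
  exact mem_P0set_mul_ZLset_of_coe_eq_diagBlock h2 hg hgv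

theorem mem_P0set_mul_ZLset_or_of_mem_P0normalizer [IsLocalRing O] [NeZero n]
    (h2 : IsUnit (2 : O)) (hσ2 : ∀ x, σ (σ x) = x) (hσO : σ '' (O : Set E) = O) {u : Oˣ}
    (hu : (u : E) * σ u ≠ 1) {g : (Matrix (ι n) (ι n) E)ˣ} (hg : g ∈ P0normalizer n E O σ) :
    g ∈ P0set n E O σ * ZLset n E σ ∨
      ∃ h ∈ P0set n E O σ * ZLset n E σ,
        (g : Matrix (ι n) (ι n) E) = (h : Matrix (ι n) (ι n) E) * Jmat n E := by
  have hu0 : (u : E) ≠ 0 := by simp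
  obtain ⟨s, hs, hsv⟩ := exists_mem_P0set_coe_eq (σ := σ) (a := (u : E) • 1)
    (smul_one_apply_mem (SetLike.coe_mem _)) (by simp [hu0])
    (by simpa [inv_smul_one] using smul_one_apply_mem (inv_mem_of_isUnit u.isUnit))
  rw [transpose_map_smul_one_inv] at hsv
  have hsZ : s ∈ ZLset n E σ := ⟨u, 1, hu0, by simp, hsv⟩
  have hz : g * s * g⁻¹ ∈ P0set n E O σ := (hg.2 s).mp hs
  have hzc : g * s * g⁻¹ ∈ Subgroup.centralizer (P0set n E O σ) :=
    (Subgroup.normal_subgroupOf_iff (Subgroup.centralizer_le_normalizer _)).mp inferInstance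
      s g (ZLset_subset_centralizer hsZ) hg.2
  obtain ⟨β, μ, -, hμ, hzv⟩ := mem_ZLset_of_mem_centralizer h2 hz hzc
  have hconj : (g : Matrix (ι n) (ι n) E) * s = (g * s * g⁻¹ : (Matrix (ι n) (ι n) E)ˣ) * g := by
    rw [← Units.val_mul, ← Units.val_mul, inv_mul_cancel_right]
  rw [hsv, hzv] at hconj
  obtain ⟨rfl, rfl | rfl⟩ := eq_one_and_eq_or_eq_of_conj hσ2 hu hμ g.isUnit hconj
  · exact .inl (mem_P0set_mul_ZLset_of_commute h2 hu0 hu hg hconj)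
  · -- Here `g s g⁻¹ = J s J`, so `J g` commutes with `s`.
    have hcomm : ((Ju n E * g : (Matrix (ι n) (ι n) E)ˣ) : Matrix (ι n) (ι n) E) *
          diagBlock ((u : E) • 1) 1 ((σ u)⁻¹ • 1) =
        diagBlock ((u : E) • 1) 1 ((σ u)⁻¹ • 1) *
          ((Ju n E * g : (Matrix (ι n) (ι n) E)ˣ) : Matrix (ι n) (ι n) E) := by
      rw [Units.val_mul, coe_Ju, Matrix.mul_assoc, hconj, map_inv₀, hσ2, inv_inv,
        ← Matrix.mul_assoc, Jmat_mul_diagBlock, Matrix.mul_assoc]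
    obtain ⟨p, hp, z, hz, hpz⟩ := mem_P0set_mul_ZLset_of_commute h2 hu0 hu
      ((P0normalizer n E O σ).mul_mem (Ju_mem_P0normalizer hσ2 hσO) hg) hcomm
    refine .inr ⟨Ju n E * p * Ju n E * (Ju n E * z * Ju n E),
      Set.mul_mem_mul (Ju_mul_mul_Ju_mem_P0set hσ2 hσO hp) (Ju_mul_mul_Ju_mem_ZLset hσ2 hz), ?_⟩
    rw [← coe_Ju, ← Units.val_mul]
    congr 1
    simp only [mul_assoc, Ju_mul_Ju_mul, Ju_mul_Ju, mul_one]
    rw [show p * z = _ from hpz, Ju_mul_Ju_mul]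

end Normalizer

theorem normalizer_P0 (hn : 0 < n) (O : Subring E) [IsDiscreteValuationRing ↥O]
    (h2 : IsUnit (2 : ↥O))
    (σ : E ≃+* E) (hσ2 : ∀ x, σ (σ x) = x)
    (hσO : σ '' (O : Set E) = O) :
    ({g ∈ Gset n E σ | ∀ h, h ∈ P0set n E O σ ↔ g * h * g⁻¹ ∈ P0set n E O σ}
        = (P0set n E O σ * ZLset n E σ) ∪
          {g : (Matrix (ι n) (ι n) E)ˣ | ∃ h ∈ P0set n E O σ * ZLset n E σ,
            (g : Matrix (ι n) (ι n) E) = (h : Matrix (ι n) (ι n) E) * Jmat n E}) ∧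
    Jmat n E * Jmat n E = 1 ∧
    ¬ ∃ h ∈ P0set n E O σ * ZLset n E σ, (h : Matrix (ι n) (ι n) E) = Jmat n E := by
  have : NeZero n := ⟨hn.ne'⟩
  obtain ⟨π, hπ⟩ := IsDiscreteValuationRing.exists_irreducible O
  obtain ⟨u, hu⟩ := exists_unit_mul_map_ne_one O (two_ne_zero_of_isUnit h2) hπ.ne_zero
    hπ.not_isUnit σ
  refine ⟨Set.ext fun g => ⟨mem_P0set_mul_ZLset_or_of_mem_P0normalizer h2 hσ2 hσO hu, ?_⟩,
    Jmat_mul_Jmat, fun ⟨h, hh, hJ⟩ => coe_ne_Jmat_of_mem_P0set_mul_ZLset hh hJ⟩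
  rintro (hg | ⟨h, hh, hgh⟩)
  · exact P0set_mul_ZLset_subset_P0normalizer hσ2 hg
  · rw [show g = h * Ju n E from Units.ext hgh]
    exact (P0normalizer n E O σ).mul_mem (P0set_mul_ZLset_subset_P0normalizer hσ2 hh)
      (Ju_mem_P0normalizer hσ2 hσO)

end Stmt0
end

section
/- Let O be a discrete valuation ring with fraction field K, let K₀ = GL_n(O) be the subgroup of GL_n(K) consisting of matrices with entries in O whose inverse also has entries in O, and let Z = {λ·Id_n : λ ∈ K^×} be the subgroup of scalar matrices. Then the normalizer of K₀ in GL_n(K) equals K₀·Z. -/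
/-!
Conjugating the transvection `1 + E_ij ∈ GL_n(O)` (`i ≠ j`) by `g` gives
`1 + (column i of g)(row j of g⁻¹)`, so if `g` normalizes `GL_n(O)` then
`v(g_ki) · v(g⁻¹_jl) ≤ 1` whenever `i ≠ j`. On the other hand `(g⁻¹ g)_jj = 1` and the
ultrametric inequality give, for every `j`, some `m` with `v(g⁻¹_jm) · v(g_mj) ≥ 1`. Together these
force all column maxima of `v(g)` to be equal, say to `v(λ)`, and then `λ⁻¹ g` and `λ g⁻¹` are
both integral. For `n ≤ 1` every invertible matrix is scalar.
-/

open scoped Pointwise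

namespace Stmt1

variable {K : Type*} [Field K]

/-- `GL_n(O)` inside `GL_n(K)`: invertible matrices whose entries, together with the
entries of the inverse, lie in the subring `O`. -/
def K0set (O : Subring K) (n : ℕ) : Set (Matrix (Fin n) (Fin n) K)ˣ :=
  {g | (∀ i j, (g : Matrix (Fin n) (Fin n) K) i j ∈ O) ∧
    (∀ i j, ((g⁻¹ : (Matrix (Fin n) (Fin n) K)ˣ) : Matrix (Fin n) (Fin n) K) i j ∈ O)}

/-- The group of invertible scalar matrices `λ · Id_n`, `λ ∈ K^×`. -/
def Zset (K : Type*) [Field K] (n : ℕ) : Set (Matrix (Fin n) (Fin n) K)ˣ :=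
  {g | ∃ lam : K, lam ≠ 0 ∧ (g : Matrix (Fin n) (Fin n) K) = lam • (1 : Matrix (Fin n) (Fin n) K)}

end Stmt1

open Matrix

theorem Valuation.exists_one_le_of_sum_eq_one {R Γ ι : Type*} [Ring R]
    [LinearOrderedCommGroupWithZero Γ] (v : Valuation R Γ) {s : Finset ι} {f : ι → R}
    (h : ∑ i ∈ s, f i = 1) : ∃ i ∈ s, 1 ≤ v (f i) := by
  by_contra! hlt
  simpa [h] using v.map_sum_lt one_ne_zero hlt

theorem Subring.mem_iff_valuation_le_one {K : Type*} [Field K] (O : Subring K) [ValuationRing O]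
    [IsFractionRing O K] (x : K) : x ∈ O ↔ ValuationRing.valuation O K x ≤ 1 := by
  rw [← Valuation.mem_integer_iff, ValuationRing.range_algebraMap_eq]
  change x ∈ O ↔ x ∈ O.subtype.range
  rw [Subring.range_subtype]

theorem exists_max_entry_mul_le_one {ι Γ : Type*} [Finite ι] [Nontrivial ι]
    [LinearOrderedCommGroupWithZero Γ] {A B : ι → ι → Γ}
    (hcross : ∀ i j, i ≠ j → ∀ k l, A k i * B j l ≤ 1) (hdiag : ∀ j, ∃ m, 1 ≤ B j m * A m j) :
    ∃ k c, A k c ≠ 0 ∧ (∀ i j, A i j ≤ A k c) ∧ ∀ i j, A k c * B i j ≤ 1 := by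
  obtain ⟨⟨k, c⟩, hmax⟩ := Finite.exists_max fun p : ι × ι => A p.1 p.2
  have hcol : ∀ i, ∃ m, A k c ≤ A m i := by
    intro i
    rcases eq_or_ne i c with rfl | hic
    · exact ⟨k, le_rfl⟩
    obtain ⟨m, hm⟩ := hdiag i
    have hB : 0 < B i m := zero_lt_iff.mpr (left_ne_zero_of_mul (zero_lt_one.trans_le hm).ne')
    refine ⟨m, le_of_mul_le_mul_right ?_ hB⟩
    calc A k c * B i m ≤ 1 := hcross c i hic.symm k m
      _ ≤ A m i * B i m := mul_comm (A m i) _ ▸ hm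
  have hkc : A k c ≠ 0 := by
    obtain ⟨m, hm⟩ := hdiag c
    have hmc : 0 < A m c := zero_lt_iff.mpr (right_ne_zero_of_mul (zero_lt_one.trans_le hm).ne')
    exact (hmc.trans_le (hmax (m, c))).ne'
  refine ⟨k, c, hkc, fun i j => hmax (i, j), fun i j => ?_⟩
  obtain ⟨i', hi'⟩ := exists_ne i
  obtain ⟨m, hm⟩ := hcol i'
  exact (mul_le_mul_left hm _).trans (hcross i' i hi' m j)

namespace Matrix.GeneralLinearGroup

variable {ι R : Type*} [Fintype ι] [DecidableEq ι] [CommRing R]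

def transvection {i j : ι} (hij : i ≠ j) (c : R) : GL ι R where
  val := Matrix.transvection i j c
  inv := Matrix.transvection i j (-c)
  val_inv := by simp [transvection_mul_transvection_same _ _ hij]
  inv_val := by simp [transvection_mul_transvection_same _ _ hij]

theorem mul_transvection_mul_inv_apply (g : GL ι R) {i j : ι} (hij : i ≠ j) (c : R) (k l : ι) :
    (g * transvection hij c * g⁻¹) k l = (1 : Matrix ι ι R) k l + g k i * c * g⁻¹ j l := by
  change (g.val * (1 + single i j c) * g⁻¹.val) k l = _
  rw [Matrix.mul_add, Matrix.add_mul, mul_one, Units.mul_inv, Matrix.add_apply, mul_apply,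
    Finset.sum_eq_single j (fun m _ hm => by rw [mul_single_apply_of_ne _ _ _ _ _ hm, zero_mul])
      (by simp), mul_single_apply_same]

end Matrix.GeneralLinearGroup

namespace Stmt1

variable {K : Type*} [Field K]

def integralGL (O : Subring K) (ι : Type*) [Fintype ι] [DecidableEq ι] : Subgroup (GL ι K) :=
  (O.matrix (n := ι)).toSubmonoid.units

theorem coe_integralGL (O : Subring K) (n : ℕ) :
    (integralGL O (Fin n) : Set (GL (Fin n) K)) = K0set O n :=
  rfl

theorem Zset_subset_center (n : ℕ) : Zset K n ⊆ Subgroup.center (GL (Fin n) K) := by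
  rintro z ⟨c, -, hz⟩
  refine Subgroup.mem_center_iff.mpr fun g => Units.ext ?_
  simp [hz]

theorem mem_Zset_of_subsingleton {n : ℕ} [Subsingleton (Fin n)] (g : GL (Fin n) K) :
    g ∈ Zset K n := by
  refine ⟨g.val.det, g.det_ne_zero, ?_⟩
  ext i j
  obtain rfl := Subsingleton.elim i j
  have : Unique (Fin n) := uniqueOfSubsingleton i
  simp [det_unique, Subsingleton.elim default i]

theorem mem_K0set_mul_Zset_of_mul_inv_mem {O : Subring K} {n : ℕ} (g : GL (Fin n) K) (μ : Kˣ)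
    (h₁ : ∀ i j, g i j * (μ⁻¹ : K) ∈ O) (h₂ : ∀ i j, (μ : K) * g⁻¹ i j ∈ O) :
    g ∈ K0set O n * Zset K n := by
  refine ⟨g * GeneralLinearGroup.scalar _ μ⁻¹, ⟨fun i j => ?_, fun i j => ?_⟩,
    GeneralLinearGroup.scalar _ μ, ⟨μ, μ.ne_zero, ?_⟩, by simp⟩
  · simpa only [Units.val_mul, GeneralLinearGroup.coe_scalar, scalar_apply, mul_diagonal,
      Units.val_inv_eq_inv_val] using h₁ i j
  · simpa [diagonal_mul] using h₂ i j
  · simp [smul_one_eq_diagonal]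

section

variable {ι : Type*} [Fintype ι] [DecidableEq ι] {O : Subring K}

theorem transvection_mem_integralGL {i j : ι} (hij : i ≠ j) {c : K} (hc : c ∈ O) :
    GeneralLinearGroup.transvection hij c ∈ integralGL O ι := by
  rw [integralGL, Submonoid.mem_units_iff, Subring.mem_toSubmonoid, Subring.mem_toSubmonoid]
  refine ⟨add_mem (one_mem _) ?_, add_mem (one_mem _) ?_⟩ <;>
    exact (single_mem_matrix O.zero_mem).mpr (by simpa using hc)

theorem mul_mem_of_mem_normalizer {g : GL ι K}
    (hg : g ∈ Subgroup.normalizer (integralGL O ι : Set (GL ι K))) {i j : ι} (hij : i ≠ j)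
    (k l : ι) : g k i * g⁻¹ j l ∈ O := by
  have h : (g * GeneralLinearGroup.transvection hij (1 : K) * g⁻¹ : GL ι K) k l ∈ O :=
    ((Subgroup.mem_normalizer_iff.mp hg _).mp (transvection_mem_integralGL hij O.one_mem)).1 k l
  rw [GeneralLinearGroup.mul_transvection_mul_inv_apply, mul_one] at h
  simpa using sub_mem h ((Subring.matrix O).one_mem k l)

end

theorem mem_K0set_mul_Zset_of_mem_normalizer {O : Subring K} [ValuationRing O]
    [IsFractionRing O K] {n : ℕ} [Nontrivial (Fin n)] {g : GL (Fin n) K}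
    (hg : g ∈ Subgroup.normalizer (integralGL O (Fin n) : Set (GL (Fin n) K))) :
    g ∈ K0set O n * Zset K n := by
  set v := ValuationRing.valuation O K
  obtain ⟨k, c, hne, hmax, hbound⟩ := exists_max_entry_mul_le_one
    (A := fun i j => v (g i j)) (B := fun i j => v (g⁻¹ i j))
    (fun i j hij k l => by
      rw [← map_mul, ← O.mem_iff_valuation_le_one]
      exact mul_mem_of_mem_normalizer hg hij k l)
    (fun j => by
      obtain ⟨m, -, hm⟩ := v.exists_one_le_of_sum_eq_one (s := Finset.univ)
        (f := fun m => g⁻¹ j m * g m j) (by rw [← mul_apply, Units.inv_mul, one_apply_eq])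
      exact ⟨m, by simpa using hm⟩)
  have hgkc : g k c ≠ 0 := v.ne_zero_iff.mp hne
  refine mem_K0set_mul_Zset_of_mul_inv_mem g (Units.mk0 _ hgkc) (fun i j => ?_)
    (fun i j => ?_)
  · rw [O.mem_iff_valuation_le_one, map_mul, Units.val_mk0, map_inv₀,
      mul_inv_le_iff₀ (zero_lt_iff.mpr hne), one_mul]
    exact hmax i j
  · rw [O.mem_iff_valuation_le_one, map_mul]
    exact hbound i j

/-- The normalizer of `K₀ = GL_n(O)` in `GL_n(K)` is `K₀ · Z`, where `O` is a discrete
valuation ring with fraction field `K` and `Z` is the group of scalar matrices. -/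
theorem normalizer_GLnO_eq_K0_mul_Z (O : Subring K) [IsDiscreteValuationRing ↥O]
    [IsFractionRing ↥O K] (n : ℕ) :
    {g : (Matrix (Fin n) (Fin n) K)ˣ | ∀ h, h ∈ K0set O n ↔ g * h * g⁻¹ ∈ K0set O n}
      = K0set O n * Zset K n := by
  change (Subgroup.normalizer (integralGL O (Fin n) : Set (GL (Fin n) K)) : Set (GL (Fin n) K)) =
    (integralGL O (Fin n) : Set (GL (Fin n) K)) * Zset K n
  refine subset_antisymm (fun g hg => ?_) (Set.mul_subset_iff.mpr fun u hu z hz => ?_)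
  · rcases subsingleton_or_nontrivial (Fin n) with _ | _
    · exact ⟨1, one_mem _, g, mem_Zset_of_subsingleton g, one_mul g⟩
    · exact mem_K0set_mul_Zset_of_mem_normalizer hg
  · exact mul_mem (Subgroup.le_normalizer hu)
      (Subgroup.center_le_normalizer _ (Zset_subset_center n hz))

end Stmt1
end

section
/- Let q = p^r be a power of an odd prime p, n an odd positive integer, k = 𝔽_{q²} and l = 𝔽_{q^{2n}}, so l/k has degree n. For x ∈ k set x̄ = x^q, and for X = (x_ij) ∈ M_n(k) set X̄ = (x̄_ij). Fix a k-basis of l and for β ∈ l let m_β ∈ M_n(k) be the matrix of multiplication by β in this basis. Let α ∈ l^× satisfy l = k(α) and α^{q^n} = α^{-1}. Then the set Ξ(α) = {X ∈ M_n(k) : m_α · X · ᵗ(m̄_α) = X} has exactly q^{2n} elements. -/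
open Matrix

/-!
Let `σ` be the `q^n`-power Frobenius of `l`: it restricts to `x ↦ x̄` on `k` (as `n` is odd) and
sends `α` to `α⁻¹`. The Gram matrix `J` of the hermitian form `(x, y) ↦ Tr_{l/k}(σ x * y)` is
invertible because the trace form is nondegenerate, and `σ α * α = 1` gives `ᵗm̄_α J m_α = J`.
Hence `X ∈ Ξ(α)` iff `X J` commutes with `m_α`; as `α` generates `l`, the matrices commuting with
`m_α` are exactly the `m_β`, `β ∈ l`. So `X ↦ X J` identifies `Ξ(α)` with `l`.
-/

theorem mul_mul_eq_self_iff_commute {M : Type*} [Monoid M] [IsDedekindFiniteMonoid M]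
    {a m j x : M} (hj : IsUnit j) (h : m * j * a = j) :
    a * x * m = x ↔ Commute a (x * j) := by
  obtain ⟨u, rfl⟩ := hj
  have hua : IsUnit (↑u * a) :=
    IsUnit.of_mul_eq_one_right (↑u⁻¹ * m) (by rw [mul_assoc, ← mul_assoc m, h, u.inv_mul])
  have hcancel : a * x * m * (↑u * a) = a * (x * ↑u) := by
    rw [mul_assoc, ← mul_assoc m, h, mul_assoc]
  rw [← hua.mul_left_inj, hcancel, commute_iff_eq, mul_assoc x]

theorem LinearMap.eq_lmul_of_commute {k l : Type*} [CommSemiring k] [CommSemiring l] [Algebra k l]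
    {α : l} (hgen : Algebra.adjoin k {α} = ⊤) {f : Module.End k l}
    (hf : Commute f (Algebra.lmul k l α)) : f = Algebra.lmul k l (f 1) := by
  have hle : Algebra.adjoin k {α} ≤ (Subalgebra.centralizer k {f}).comap (Algebra.lmul k l) :=
    Algebra.adjoin_le <| Set.singleton_subset_iff.mpr <|
      (Subalgebra.mem_centralizer_iff k).mpr (by simpa using hf.eq)
  ext x
  have hx : f * Algebra.lmul k l x = Algebra.lmul k l x * f :=
    (Subalgebra.mem_centralizer_iff k).mp (hle (hgen ▸ Algebra.mem_top)) f rfl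
  simpa [mul_comm] using LinearMap.congr_fun hx 1

theorem RingHom.apply_eq_sum_repr {k l ι : Type*} [CommSemiring k] [Semiring l] [Algebra k l]
    [Fintype ι] (b : Module.Basis ι k l) {σ : l →+* l} {τ : k → k}
    (hστ : ∀ c, σ (algebraMap k l c) = algebraMap k l (τ c)) (x : l) :
    σ x = ∑ i, τ (b.repr x i) • σ (b i) := by
  conv_lhs => rw [← b.sum_repr x]
  simp only [map_sum, Algebra.smul_def, map_mul, hστ]

namespace Algebra

theorem centralizer_leftMulMatrix {k l ι : Type*} [CommRing k] [CommRing l] [Algebra k l]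
    [Fintype ι] [DecidableEq ι] (b : Module.Basis ι k l) {α : l}
    (hgen : adjoin k {α} = ⊤) :
    Set.centralizer {leftMulMatrix b α} = Set.range (leftMulMatrix b) := by
  ext Y
  simp only [Set.mem_centralizer_iff, Set.mem_singleton_iff, forall_eq, Set.mem_range]
  constructor
  · intro hY
    set e := LinearMap.toMatrixAlgEquiv b
    have hα : e.symm (leftMulMatrix b α) = lmul k l α := e.symm_apply_apply _
    have hf : Commute (e.symm Y) (lmul k l α) := hα ▸ (Commute.map hY.symm e.symm)
    refine ⟨e.symm Y 1, ?_⟩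
    change e (lmul k l _) = Y
    rw [← LinearMap.eq_lmul_of_commute hgen hf, e.apply_symm_apply]
  · rintro ⟨β, rfl⟩
    exact ((Commute.all α β).map (leftMulMatrix b)).eq

theorem natCard_setOf_leftMulMatrix_mul_mul_eq_self {k l ι : Type*} [CommRing k]
    [CommRing l] [Algebra k l] [Fintype ι] [DecidableEq ι] (b : Module.Basis ι k l) {α : l}
    (hgen : adjoin k {α} = ⊤) {M J : Matrix ι ι k} (hJ : IsUnit J)
    (h : M * J * leftMulMatrix b α = J) :
    Nat.card {X | leftMulMatrix b α * X * M = X} = Nat.card l := by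
  calc Nat.card {X | leftMulMatrix b α * X * M = X}
      = Nat.card (Set.centralizer {leftMulMatrix b α}) :=
        Nat.card_congr <| Equiv.subtypeEquiv (Units.mulRight hJ.unit) fun X => by
          simp [mul_mul_eq_self_iff_commute hJ h, Set.mem_centralizer_iff, commute_iff_eq]
    _ = Nat.card l := by
      rw [centralizer_leftMulMatrix b hgen,
        Nat.card_range_of_injective (leftMulMatrix_injective b)]

variable {k l ι : Type*} [Field k] [Field l] [Algebra k l] [Fintype ι] (b : Module.Basis ι k l)

noncomputable def twistedTraceMatrix (σ : l →+* l) : Matrix ι ι k :=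
  Matrix.of fun i j => trace k l (σ (b i) * b j)

variable {σ : l →+* l} {τ : k → k} [DecidableEq ι]

theorem transpose_map_mul_twistedTraceMatrix_mul
    (hστ : ∀ c, σ (algebraMap k l c) = algebraMap k l (τ c)) {α : l} (hα : σ α * α = 1) :
    ((leftMulMatrix b α).map τ)ᵀ * twistedTraceMatrix b σ * leftMulMatrix b α =
      twistedTraceMatrix b σ := by
  ext i j
  have hij : σ (b i) * b j = σ (α * b i) * (α * b j) := by
    rw [map_mul, mul_mul_mul_comm, hα, one_mul]
  conv_rhs => rw [twistedTraceMatrix, of_apply, hij, σ.apply_eq_sum_repr b hστ,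
    ← b.sum_repr (α * b j), Finset.sum_mul_sum]
  simp only [Matrix.mul_apply, transpose_apply, map_apply, twistedTraceMatrix, of_apply,
    leftMulMatrix_eq_repr_mul, Finset.sum_mul, map_sum, smul_mul_smul_comm, map_smul,
    smul_eq_mul]
  rw [Finset.sum_comm]
  refine Finset.sum_congr rfl fun s _ => Finset.sum_congr rfl fun t _ => ?_
  ring

theorem isUnit_twistedTraceMatrix [FiniteDimensional k l] [Algebra.IsSeparable k l]
    (hστ : ∀ c, σ (algebraMap k l c) = algebraMap k l (τ c)) (hσ : Function.Surjective σ) :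
    IsUnit (twistedTraceMatrix b σ) := by
  rw [isUnit_iff_isUnit_det, isUnit_iff_ne_zero]
  intro hdet
  obtain ⟨c, hc0, hc⟩ := exists_mulVec_eq_zero_iff.mpr hdet
  have hspan : Submodule.span k (Set.range (σ ∘ b)) = ⊤ := by
    refine Submodule.eq_top_iff'.mpr fun x => ?_
    obtain ⟨w, rfl⟩ := hσ x
    rw [σ.apply_eq_sum_repr b hστ]
    exact Submodule.sum_mem _ fun i _ => Submodule.smul_mem _ _ (Submodule.subset_span ⟨i, rfl⟩)
  have hy : (traceForm k l).flip (b.equivFun.symm c) = 0 := by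
    refine LinearMap.ext_on_range hspan fun i => ?_
    simpa [Module.Basis.equivFun_symm_apply, Finset.mul_sum, mulVec, dotProduct,
      twistedTraceMatrix, mul_comm] using congrFun hc i
  have hy0 : b.equivFun.symm c = 0 :=
    (traceForm_nondegenerate k l).2 _ fun x => LinearMap.congr_fun hy x
  exact hc0 (b.equivFun.symm.map_eq_zero_iff.mp hy0)

end Algebra

theorem FiniteField.pow_pow_odd_of_card_eq_sq {K : Type*} [GroupWithZero K] [Fintype K] {q n : ℕ}
    (hK : Fintype.card K = q ^ 2) (hn : Odd n) (c : K) : c ^ q ^ n = c ^ q := by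
  obtain ⟨m, rfl⟩ := hn
  rw [pow_succ, pow_mul, pow_mul q, ← hK, FiniteField.pow_card_pow]

theorem card_Xi_alpha_general (p r q n : ℕ) (hp : p.Prime) (hq : q = p ^ r) (hn : Odd n)
    (k l : Type*) [Field k] [Fintype k] [Field l] [Fintype l] [Algebra k l]
    (hcardk : Fintype.card k = q ^ 2) (hcardl : Fintype.card l = q ^ (2 * n))
    (b : Module.Basis (Fin n) k l)
    (α : l) (hα0 : α ≠ 0) (hgen : Algebra.adjoin k {α} = ⊤)
    (hα : α ^ q ^ n = α⁻¹) :
    Nat.card {X : Matrix (Fin n) (Fin n) k |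
        LinearMap.toMatrix b b (LinearMap.mulLeft k α) * X *
          ((LinearMap.toMatrix b b (LinearMap.mulLeft k α)).map (fun x => x ^ q))ᵀ = X}
      = q ^ (2 * n) := by
  subst hq
  have := Fact.mk hp
  have : CharP k p := charP_of_card_eq_prime_pow (by rw [hcardk, ← pow_mul])
  have : CharP l p := charP_of_injective_algebraMap (algebraMap k l).injective p
  have : FiniteDimensional k l := Module.Finite.of_basis b
  set σ := iterateFrobenius l p (r * n)
  have hσ (x : l) : σ x = x ^ (p ^ r) ^ n := by rw [iterateFrobenius_def, pow_mul]
  have hστ (c : k) : σ (algebraMap k l c) = algebraMap k l (c ^ p ^ r) := by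
    rw [hσ, ← map_pow, FiniteField.pow_pow_odd_of_card_eq_sq hcardk hn]
  have hσα : σ α * α = 1 := by rw [hσ, hα, inv_mul_cancel₀ hα0]
  have hσsurj : Function.Surjective σ := Finite.surjective_of_injective σ.injective
  rw [Algebra.toMatrix_lmul_eq, Algebra.natCard_setOf_leftMulMatrix_mul_mul_eq_self b hgen
      (Algebra.isUnit_twistedTraceMatrix b hστ hσsurj)
      (Algebra.transpose_map_mul_twistedTraceMatrix_mul b hστ hσα),
    Nat.card_eq_fintype_card, hcardl]

/-- Let `q = p^r` (`p` an odd prime), `n` odd, `k = 𝔽_{q²}`, `l = 𝔽_{q^{2n}}` (so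
`[l : k] = n`), `b` a `k`-basis of `l`, and `α ∈ l^×` with `l = k(α)` and
`α^{q^n} = α⁻¹`.  Writing `m_α` for the matrix of multiplication by `α` in the basis
`b` and `bar` for the entrywise `q`-power Frobenius, the set
`Ξ(α) = {X ∈ M_n(k) | m_α · X · ᵗ(m̄_α) = X}` has exactly `q^{2n}` elements. -/
theorem card_Xi_alpha (p r q n : ℕ) (hp : p.Prime) (hodd : Odd p) (hr : 0 < r)
    (hq : q = p ^ r) (hn : Odd n) (hn0 : 0 < n)
    (k l : Type*) [Field k] [Fintype k] [Field l] [Fintype l] [Algebra k l]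
    (hcardk : Fintype.card k = q ^ 2) (hcardl : Fintype.card l = q ^ (2 * n))
    (hdeg : Module.finrank k l = n)
    (b : Module.Basis (Fin n) k l)
    (α : l) (hα0 : α ≠ 0) (hgen : Algebra.adjoin k {α} = ⊤)
    (hα : α ^ q ^ n = α⁻¹) :
    Nat.card {X : Matrix (Fin n) (Fin n) k |
        LinearMap.toMatrix b b (LinearMap.mulLeft k α) * X *
          ((LinearMap.toMatrix b b (LinearMap.mulLeft k α)).map (fun x => x ^ q))ᵀ = X}
      = q ^ (2 * n) :=
  card_Xi_alpha_general p r q n hp hq hn k l hcardk hcardl b α hα0 hgen hα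
end

section
/- Let q = p^r be a power of an odd prime p, n an odd positive integer, k = 𝔽_{q²} and l = 𝔽_{q^{2n}}, so l/k has degree n. With bar the q-power Frobenius, m_β the multiplication matrix of β ∈ l in a fixed k-basis of l, and α ∈ l^× with l = k(α) and α^{q^n} = α^{-1}, the two sets Ξ₁(α) = {X ∈ M_n(k) : m_α·X·ᵗ(m̄_α) = X and ᵗX̄ = X} and Ξ₋₁(α) = {X ∈ M_n(k) : m_α·X·ᵗ(m̄_α) = X and ᵗX̄ = -X} have the same cardinality; indeed, for any γ ∈ k^× with γ^q = -γ, the map X ↦ γ·X is a bijection from Ξ₁(α) onto Ξ₋₁(α). -/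
open Matrix

/-! The map `X ↦ γ • X` commutes with the twisted conjugation `X ↦ m_α X ᵗm̄_α`, while
`γ^q = -γ` turns the condition `ᵗX̄ = X` into `ᵗX̄ = -X`.
Such a `γ` exists in `𝔽_{q²}` for odd `q`: if `c` is a non-square, then `c^((q²-1)/2) = -1`
and `γ = c^((q+1)/2)` satisfies `γ^(q-1) = c^((q²-1)/2)`. -/

theorem exists_ne_zero_pow_eq_neg_self {k : Type*} [Field k] [Fintype k] {q : ℕ} (hq : Odd q)
    (hcard : Fintype.card k = q ^ 2) : ∃ γ : k, γ ≠ 0 ∧ γ ^ q = -γ := by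
  obtain ⟨t, rfl⟩ := hq
  have hchar : ringChar k ≠ 2 := by
    rw [Ne, FiniteField.even_card_iff_char_two, hcard, Nat.odd_iff.mp (Odd.pow ⟨t, rfl⟩)]
    exact one_ne_zero
  obtain ⟨c, hc⟩ := FiniteField.exists_nonsquare hchar
  have hc0 : c ≠ 0 := by rintro rfl; exact hc .zero
  have hhalf : Fintype.card k / 2 = (t + 1) * (2 * t) := by
    rw [hcard]; ring_nf; omega
  have hneg : c ^ ((t + 1) * (2 * t)) = -1 := by
    rw [← hhalf]
    exact (FiniteField.pow_dichotomy hchar hc0).resolve_left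
      (mt (FiniteField.isSquare_iff hchar hc0).mpr hc)
  refine ⟨c ^ (t + 1), pow_ne_zero _ hc0, ?_⟩
  rw [← pow_mul, show (t + 1) * (2 * t + 1) = (t + 1) * (2 * t) + (t + 1) by ring, pow_add,
    hneg, neg_one_mul]

theorem Matrix.map_pow_smul {m n R : Type*} [CommMonoid R] (q : ℕ) (γ : R)
    (X : Matrix m n R) : (γ • X).map (· ^ q) = γ ^ q • X.map (· ^ q) := by
  ext i j
  simp [mul_pow]

section

variable {ι k : Type*} [Fintype ι] [Field k] {γ : k}

theorem mul_smul_mul_eq_smul_iff (hγ : γ ≠ 0) (A B X : Matrix ι ι k) :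
    A * (γ • X) * B = γ • X ↔ A * X * B = X := by
  rw [Matrix.mul_smul, Matrix.smul_mul]
  exact (smul_right_injective _ hγ).eq_iff

theorem transpose_map_pow_smul_eq_neg_iff {q : ℕ} (hγ : γ ≠ 0) (hγq : γ ^ q = -γ)
    (X : Matrix ι ι k) :
    ((γ • X).map (· ^ q))ᵀ = -(γ • X) ↔ (X.map (· ^ q))ᵀ = X := by
  rw [Matrix.map_pow_smul, transpose_smul, hγq, neg_smul, neg_inj]
  exact (smul_right_injective _ hγ).eq_iff

theorem bijOn_smul_of_pow_eq_neg_self {q : ℕ} (hγ : γ ≠ 0) (hγq : γ ^ q = -γ)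
    (A B : Matrix ι ι k) :
    Set.BijOn (fun X => γ • X)
      {X : Matrix ι ι k | A * X * B = X ∧ (X.map (· ^ q))ᵀ = X}
      {X : Matrix ι ι k | A * X * B = X ∧ (X.map (· ^ q))ᵀ = -X} :=
  (MulAction.toPerm (Units.mk0 γ hγ)).bijOn fun X =>
    and_congr (mul_smul_mul_eq_smul_iff hγ A B X) (transpose_map_pow_smul_eq_neg_iff hγ hγq X)

end

theorem bij_Xi_one_Xi_neg_one_general (p r q n : ℕ) (hodd : Odd p)
    (hq : q = p ^ r)
    (k l : Type*) [Field k] [Fintype k] [Field l] [Algebra k l]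
    (hcardk : Fintype.card k = q ^ 2)
    (b : Module.Basis (Fin n) k l)
    (α : l) :
    (∀ γ : k, γ ≠ 0 → γ ^ q = -γ →
      Set.BijOn (fun X => γ • X)
        {X : Matrix (Fin n) (Fin n) k |
          LinearMap.toMatrix b b (LinearMap.mulLeft k α) * X *
            ((LinearMap.toMatrix b b (LinearMap.mulLeft k α)).map (fun x => x ^ q))ᵀ = X ∧
          (X.map (fun x => x ^ q))ᵀ = X}
        {X : Matrix (Fin n) (Fin n) k |
          LinearMap.toMatrix b b (LinearMap.mulLeft k α) * X *
            ((LinearMap.toMatrix b b (LinearMap.mulLeft k α)).map (fun x => x ^ q))ᵀ = X ∧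
          (X.map (fun x => x ^ q))ᵀ = -X}) ∧
    Nat.card {X : Matrix (Fin n) (Fin n) k |
        LinearMap.toMatrix b b (LinearMap.mulLeft k α) * X *
          ((LinearMap.toMatrix b b (LinearMap.mulLeft k α)).map (fun x => x ^ q))ᵀ = X ∧
        (X.map (fun x => x ^ q))ᵀ = X}
      = Nat.card {X : Matrix (Fin n) (Fin n) k |
          LinearMap.toMatrix b b (LinearMap.mulLeft k α) * X *
            ((LinearMap.toMatrix b b (LinearMap.mulLeft k α)).map (fun x => x ^ q))ᵀ = X ∧
          (X.map (fun x => x ^ q))ᵀ = -X} := by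
  set m := LinearMap.toMatrix b b (LinearMap.mulLeft k α)
  have hbij : ∀ γ : k, γ ≠ 0 → γ ^ q = -γ → Set.BijOn (fun X => γ • X) _ _ :=
    fun γ hγ hγq => bijOn_smul_of_pow_eq_neg_self hγ hγq m (m.map (· ^ q))ᵀ
  obtain ⟨γ, hγ, hγq⟩ := exists_ne_zero_pow_eq_neg_self (hq ▸ hodd.pow) hcardk
  exact ⟨hbij, Nat.card_congr (hbij γ hγ hγq).equiv⟩

/-- With `q = p^r` (`p` odd prime), `n` odd, `k = 𝔽_{q²}`, `l = 𝔽_{q^{2n}}`, `m_α` the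
multiplication matrix of `α` in a fixed `k`-basis of `l`, where `l = k(α)` and
`α^{q^n} = α⁻¹`: for any `γ ∈ k^×` with `γ^q = -γ`, the map `X ↦ γ·X` is a bijection
from `Ξ₁(α)` onto `Ξ₋₁(α)`; in particular these two sets have the same cardinality. -/
theorem bij_Xi_one_Xi_neg_one (p r q n : ℕ) (hp : p.Prime) (hodd : Odd p) (hr : 0 < r)
    (hq : q = p ^ r) (hn : Odd n) (hn0 : 0 < n)
    (k l : Type*) [Field k] [Fintype k] [Field l] [Fintype l] [Algebra k l]
    (hcardk : Fintype.card k = q ^ 2) (hcardl : Fintype.card l = q ^ (2 * n))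
    (hdeg : Module.finrank k l = n)
    (b : Module.Basis (Fin n) k l)
    (α : l) (hα0 : α ≠ 0) (hgen : Algebra.adjoin k {α} = ⊤)
    (hα : α ^ q ^ n = α⁻¹) :
    (∀ γ : k, γ ≠ 0 → γ ^ q = -γ →
      Set.BijOn (fun X => γ • X)
        {X : Matrix (Fin n) (Fin n) k |
          LinearMap.toMatrix b b (LinearMap.mulLeft k α) * X *
            ((LinearMap.toMatrix b b (LinearMap.mulLeft k α)).map (fun x => x ^ q))ᵀ = X ∧
          (X.map (fun x => x ^ q))ᵀ = X}
        {X : Matrix (Fin n) (Fin n) k |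
          LinearMap.toMatrix b b (LinearMap.mulLeft k α) * X *
            ((LinearMap.toMatrix b b (LinearMap.mulLeft k α)).map (fun x => x ^ q))ᵀ = X ∧
          (X.map (fun x => x ^ q))ᵀ = -X}) ∧
    Nat.card {X : Matrix (Fin n) (Fin n) k |
        LinearMap.toMatrix b b (LinearMap.mulLeft k α) * X *
          ((LinearMap.toMatrix b b (LinearMap.mulLeft k α)).map (fun x => x ^ q))ᵀ = X ∧
        (X.map (fun x => x ^ q))ᵀ = X}
      = Nat.card {X : Matrix (Fin n) (Fin n) k |
          LinearMap.toMatrix b b (LinearMap.mulLeft k α) * X *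
            ((LinearMap.toMatrix b b (LinearMap.mulLeft k α)).map (fun x => x ^ q))ᵀ = X ∧
          (X.map (fun x => x ^ q))ᵀ = -X} :=
  bij_Xi_one_Xi_neg_one_general p r q n hodd hq k l hcardk b α
end

section
/- Let q = p^r be a power of an odd prime p, n an odd positive integer, k = 𝔽_{q²} and l = 𝔽_{q^{2n}}, so l/k has degree n. With bar the q-power Frobenius, m_β the multiplication matrix of β ∈ l in a fixed k-basis of l, and α ∈ l^× with l = k(α) and α^{q^n} = α^{-1}, for each ε = ±1 the set Ξ_ε(α) = {X ∈ M_n(k) : m_α·X·ᵗ(m̄_α) = X and ᵗX̄ = ε·X} has exactly q^n elements. -/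
/-!
Let `f` be the `q`-Frobenius of `k`, an involution since `|k| = q²`, and `F = (·) ^ q ^ n` on `l`,
which restricts to `f` on `k` because `n` is odd, and sends `α` to `α⁻¹`. The space
`Ξ(α) = {X | m_α X (m̄_α)ᵀ = X}` contains an invertible matrix `P`, namely the change of basis from
`b` to the image under `F` of the trace-dual basis of `b`. Right multiplication by `P⁻¹` identifies
`Ξ(α)` with the centralizer of `m_α`, which is `m(l)` since `α` generates `l`; so `|Ξ(α)| = q^{2n}`.
Finally `X ↦ X̄ᵀ` is an `f`-semilinear involution of `Ξ(α)`, and for `ω ≠ 0` with `ω^q = -ω` we get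
`Ξ(α) = Ξ_ε(α) ⊕ ω Ξ_ε(α)`, whence `|Ξ_ε(α)|² = q^{2n}`.
-/

open Matrix Algebra

theorem card_eigenset_sq_eq_card {K V : Type*} [Field K] [AddCommGroup V] [Module K V]
    {φ : K →+* K} (σ : V →ₛₗ[φ] V) (hσ : Function.Involutive σ) (h2 : (2 : K) ≠ 0)
    {ω : K} (hω : ω ≠ 0) (hφω : φ ω = -ω) {ε : K} (hε : ε = 1 ∨ ε = -1) :
    Nat.card {x : V // σ x = ε • x} ^ 2 = Nat.card V := by
  have hφε : φ ε = ε := by rcases hε with rfl | rfl <;> simp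
  have hεε : ε * ε = 1 := by rcases hε with rfl | rfl <;> norm_num
  have hφ2 : φ 2⁻¹ = 2⁻¹ := by simp [map_ofNat]
  have hφω' : φ ω⁻¹ = -ω⁻¹ := by rw [map_inv₀, hφω, inv_neg]
  let e : {x : V // σ x = ε • x} × {x : V // σ x = ε • x} ≃ V :=
    { toFun := fun xy => xy.1 + ω • xy.2
      invFun := fun z =>
        (⟨(2 : K)⁻¹ • (z + ε • σ z), by
            rw [map_smulₛₗ, map_add, map_smulₛₗ, hσ z, hφ2, hφε]
            match_scalars <;> grind⟩,
         ⟨ω⁻¹ • (2 : K)⁻¹ • (z - ε • σ z), by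
            rw [map_smulₛₗ, map_smulₛₗ, map_sub, map_smulₛₗ, hσ z, hφ2, hφε, hφω']
            match_scalars <;> grind⟩)
      left_inv := by
        rintro ⟨⟨x, hx⟩, ⟨y, hy⟩⟩
        simp only [map_add, map_smulₛₗ, hx, hy, hφω, Prod.mk.injEq, Subtype.mk.injEq]
        constructor <;> match_scalars <;> grind
      right_inv := fun z => by
        simp only
        match_scalars <;> grind }
  rw [sq, ← Nat.card_prod, Nat.card_congr e]

namespace Matrix

variable {ι K : Type*} [Fintype ι] [CommRing K] (f : K →+* K) (A : Matrix ι ι K)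

def twistedCongrFixed : Submodule K (Matrix ι ι K) where
  carrier := {X | A * X * (A.map f)ᵀ = X}
  add_mem' {X Y} hX hY := by
    rw [Set.mem_ofPred_eq] at *
    rw [mul_add, add_mul, hX, hY]
  zero_mem' := by simp
  smul_mem' c X hX := by
    rw [Set.mem_ofPred_eq] at *
    rw [mul_smul_comm, smul_mul_assoc, hX]

variable {f}

theorem map_transpose_mul_mul (hf : Function.Involutive f) (X : Matrix ι ι K) :
    ((A * X * (A.map f)ᵀ).map f)ᵀ = A * (X.map f)ᵀ * (A.map f)ᵀ := by
  have hff : (A.map f).map f = A := by simp [Matrix.map_map, hf.comp_self]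
  rw [Matrix.map_mul, Matrix.map_mul, transpose_map, hff]
  simp [Matrix.transpose_mul, Matrix.mul_assoc]

def twistedCongrFixed.conjTranspose (hf : Function.Involutive f) :
    twistedCongrFixed f A →ₛₗ[f] twistedCongrFixed f A where
  toFun X := ⟨(X.1.map f)ᵀ, by
    change A * _ * _ = _
    rw [← map_transpose_mul_mul A hf, X.2]⟩
  map_add' X Y := by ext1; simp [Matrix.map_add]
  map_smul' c X := by ext1; simp [Matrix.map_smul']

theorem twistedCongrFixed.conjTranspose_involutive (hf : Function.Involutive f) :
    Function.Involutive (twistedCongrFixed.conjTranspose A hf) := fun X => by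
  ext1
  change (((X : Matrix ι ι K).map f)ᵀ.map f)ᵀ = X
  rw [← transpose_map, transpose_transpose, Matrix.map_map, hf.comp_self, Matrix.map_id]

end Matrix

theorem card_setOf_mul_mul_eq_self_eq_card_centralizer {M : Type*} [Monoid M] {A B P : M}
    (hA : IsUnit A) (hP : IsUnit P) (h : A * P * B = P) :
    Nat.card {X | A * X * B = X} = Nat.card (Set.centralizer {A}) := by
  lift A to Mˣ using hA
  lift P to Mˣ using hP
  obtain rfl : B = ↑P⁻¹ * ↑A⁻¹ * ↑P := by
    rw [mul_assoc, Units.eq_inv_mul_iff_mul_eq, Units.eq_inv_mul_iff_mul_eq, ← mul_assoc, h]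
  refine Nat.card_congr ((Units.mulRight P⁻¹).subtypeEquiv fun X => ?_)
  simp only [Set.mem_ofPred_eq, Set.mem_centralizer_iff, Set.mem_singleton_iff, forall_eq,
    Units.mulRight_apply]
  rw [← mul_assoc, ← Units.eq_mul_inv_iff_mul_eq, ← mul_assoc, Units.mul_inv_eq_iff_eq_mul,
    mul_assoc]

theorem Algebra.eq_lmul_of_commute {R A : Type*} [CommSemiring R] [CommSemiring A] [Algebra R A]
    {a : A} (ha : adjoin R {a} = ⊤) {g : Module.End R A}
    (hg : Commute (lmul R A a) g) : g = lmul R A (g 1) := by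
  have hcomm : ∀ x, Commute (lmul R A x) g := by
    have : adjoin R {a} ≤ (Subalgebra.centralizer R {g}).comap (lmul R A) := by
      rw [adjoin_le_iff, Set.singleton_subset_iff, SetLike.mem_coe, Subalgebra.mem_comap,
        Subalgebra.mem_centralizer_iff]
      simpa using hg.eq.symm
    intro x
    have hx := this (ha ▸ mem_top (x := x))
    rw [Subalgebra.mem_comap, Subalgebra.mem_centralizer_iff] at hx
    exact (hx g rfl).symm
  ext x
  simpa [mul_comm] using (LinearMap.congr_fun (hcomm x) 1).symm

theorem Algebra.centralizer_leftMulMatrix_s5 {R S ι : Type*} [CommRing R] [CommRing S] [Algebra R S]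
    [Fintype ι] [DecidableEq ι] (b : Module.Basis ι R S) {a : S}
    (ha : adjoin R {a} = ⊤) :
    Set.centralizer {leftMulMatrix b a} = Set.range (leftMulMatrix b) := by
  ext Y
  simp only [Set.mem_centralizer_iff, Set.mem_singleton_iff, forall_eq, Set.mem_range]
  constructor
  · intro hY
    set e := LinearMap.toMatrixAlgEquiv b
    have hg : Commute (lmul R S a) (e.symm Y) := by
      have h := Commute.map (show Commute (leftMulMatrix b a) Y from hY) e.symm
      rwa [show leftMulMatrix b a = e (lmul R S a) from rfl, e.symm_apply_apply] at h
    refine ⟨e.symm Y 1, ?_⟩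
    rw [leftMulMatrix_apply, ← eq_lmul_of_commute ha hg]
    exact e.apply_symm_apply Y
  · rintro ⟨β, rfl⟩
    rw [← map_mul, ← map_mul, mul_comm]

theorem Algebra.leftMulMatrix_dualBasis_traceForm {K L ι : Type*} [Field K] [Field L]
    [Algebra K L] [FiniteDimensional K L] [Algebra.IsSeparable K L] [Fintype ι] [DecidableEq ι]
    (b : Module.Basis ι K L) (x : L) :
    leftMulMatrix ((traceForm K L).dualBasis (traceForm_nondegenerate K L) b) x =
      (leftMulMatrix b x)ᵀ := by
  set γ := (traceForm K L).dualBasis (traceForm_nondegenerate K L) b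
  have hb : (traceForm K L).dualBasis (traceForm_nondegenerate K L) γ = b :=
    LinearMap.BilinForm.dualBasis_dualBasis _ (traceForm_isSymm K) b
  ext i j
  rw [transpose_apply, leftMulMatrix_eq_repr_mul, leftMulMatrix_eq_repr_mul,
    LinearMap.BilinForm.dualBasis_repr_apply, ← hb, LinearMap.BilinForm.dualBasis_repr_apply, hb,
    traceForm_apply, traceForm_apply, mul_right_comm]

namespace Module.Basis

variable {K L ι : Type*} [Field K] [Field L] [Algebra K L] [FiniteDimensional K L] [Fintype ι]
  {f : K →+* K} (hf : Function.Involutive f) {F : L →+* L}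
  (hF : ∀ c, F (algebraMap K L c) = algebraMap K L (f c))

noncomputable def mapRingHom (γ : Basis ι K L) : Basis ι K L :=
  basisOfLinearIndependentOfCardEqFinrank' (F ∘ γ)
    (γ.linearIndependent.map_of_injective_injective f F.toAddMonoidHom
      (fun _ hr => f.injective (hr.trans f.map_zero.symm))
      (fun _ hm => F.injective (hm.trans F.map_zero.symm))
      (fun r m => by simp [Algebra.smul_def, hF, hf r]))
    (Module.finrank_eq_card_basis γ).symm

variable (γ : Basis ι K L)

theorem coe_mapRingHom : ⇑(γ.mapRingHom hf hF) = F ∘ γ :=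
  coe_basisOfLinearIndependentOfCardEqFinrank' ..

theorem mapRingHom_repr_map (y : L) (i : ι) :
    (γ.mapRingHom hf hF).repr (F y) i = f (γ.repr y i) := by
  have hFy : F y = ∑ j, f (γ.repr y j) • γ.mapRingHom hf hF j := by
    conv_lhs => rw [← γ.sum_repr y]
    simp [map_sum, Algebra.smul_def, hF, coe_mapRingHom]
  rw [hFy, repr_sum_self]

theorem leftMulMatrix_mapRingHom [DecidableEq ι] (x : L) :
    leftMulMatrix (γ.mapRingHom hf hF) (F x) = (leftMulMatrix γ x).map f := by
  ext i j
  rw [Matrix.map_apply, leftMulMatrix_eq_repr_mul, leftMulMatrix_eq_repr_mul, coe_mapRingHom,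
    Function.comp_apply, ← map_mul, mapRingHom_repr_map]

end Module.Basis

/-- The witness is the change of basis from `b` to the image under `F` of the trace-dual basis. -/
theorem exists_isUnit_leftMulMatrix_mul_mul_map_transpose_eq {K L ι : Type*} [Field K] [Field L]
    [Algebra K L] [FiniteDimensional K L] [Algebra.IsSeparable K L] [Fintype ι] [DecidableEq ι]
    {f : K →+* K} (hf : Function.Involutive f) {F : L →+* L}
    (hF : ∀ c, F (algebraMap K L c) = algebraMap K L (f c)) (b : Module.Basis ι K L) {α : L}
    (hα0 : α ≠ 0) (hFα : F α = α⁻¹) :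
    ∃ P, IsUnit P ∧ leftMulMatrix b α * P * ((leftMulMatrix b α).map f)ᵀ = P := by
  set γ := (traceForm K L).dualBasis (traceForm_nondegenerate K L) b
  set c := γ.mapRingHom hf hF
  refine ⟨b.toMatrix c, @isUnit_of_invertible _ _ _ (b.invertibleToMatrix c), ?_⟩
  have hbar : ((leftMulMatrix b α).map f)ᵀ = leftMulMatrix c α⁻¹ := by
    rw [← hFα, Module.Basis.leftMulMatrix_mapRingHom, leftMulMatrix_dualBasis_traceForm,
      transpose_map]
  rw [hbar, Matrix.mul_assoc, leftMulMatrix_apply, leftMulMatrix_apply,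
    basis_toMatrix_mul_linearMap_toMatrix, ← LinearMap.toMatrix_comp, ← Module.End.mul_eq_comp,
    ← map_mul, mul_inv_cancel₀ hα0, map_one, Module.End.one_eq_id,
    LinearMap.toMatrix_id_eq_basis_toMatrix]

theorem card_twistedCongrFixed_leftMulMatrix {K L ι : Type*} [Field K] [Field L]
    [Algebra K L] [FiniteDimensional K L] [Algebra.IsSeparable K L] [Fintype ι] [DecidableEq ι]
    {f : K →+* K} (hf : Function.Involutive f) {F : L →+* L}
    (hF : ∀ c, F (algebraMap K L c) = algebraMap K L (f c)) (b : Module.Basis ι K L) {α : L}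
    (hα0 : α ≠ 0) (hFα : F α = α⁻¹) (hgen : adjoin K {α} = ⊤) :
    Nat.card (twistedCongrFixed f (leftMulMatrix b α)) = Nat.card L := by
  obtain ⟨P, hP, hAP⟩ := exists_isUnit_leftMulMatrix_mul_mul_map_transpose_eq hf hF b hα0 hFα
  rw [← Nat.card_range_of_injective (leftMulMatrix_injective b),
    ← centralizer_leftMulMatrix_s5 b hgen]
  exact card_setOf_mul_mul_eq_self_eq_card_centralizer ((IsUnit.mk0 α hα0).map _) hP hAP

theorem RingHom.exists_ne_zero_map_eq_neg {R : Type*} [Ring R] {f : R →+* R}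
    (hf : Function.Involutive f) {ξ : R} (hξ : f ξ ≠ ξ) : ∃ ω, ω ≠ 0 ∧ f ω = -ω :=
  ⟨ξ - f ξ, sub_ne_zero.mpr hξ.symm, by rw [map_sub, hf ξ, neg_sub]⟩

open Polynomial in
theorem FiniteField.exists_pow_ne_self {K : Type*} [Field K] [Fintype K] {q : ℕ} (hq : 1 < q)
    (hqK : q < Fintype.card K) : ∃ ξ : K, ξ ^ q ≠ ξ := by
  by_contra! h
  have hle := card_le_degree_of_subset_roots (p := X ^ q - X) (Z := Finset.univ) fun x _ => by
    rw [mem_roots (FiniteField.X_pow_card_sub_X_ne_zero K hq), IsRoot.def]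
    simp [h x]
  rw [FiniteField.X_pow_card_sub_X_natDegree_eq K hq, Finset.card_univ] at hle
  omega

theorem card_Xi_eps_general (p r q n : ℕ) (hp : p.Prime) (hodd : Odd p)
    (hq : q = p ^ r) (hn : Odd n)
    (k l : Type*) [Field k] [Fintype k] [Field l] [Fintype l] [Algebra k l]
    (hcardk : Fintype.card k = q ^ 2) (hcardl : Fintype.card l = q ^ (2 * n))
    (b : Module.Basis (Fin n) k l)
    (α : l) (hα0 : α ≠ 0) (hgen : Algebra.adjoin k {α} = ⊤)
    (hα : α ^ q ^ n = α⁻¹) :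
    ∀ ε : k, ε = 1 ∨ ε = -1 →
      Nat.card {X : Matrix (Fin n) (Fin n) k |
          LinearMap.toMatrix b b (LinearMap.mulLeft k α) * X *
            ((LinearMap.toMatrix b b (LinearMap.mulLeft k α)).map (fun x => x ^ q))ᵀ = X ∧
          (X.map (fun x => x ^ q))ᵀ = ε • X}
        = q ^ n := by
  intro ε hε
  have : Fact p.Prime := ⟨hp⟩
  have : CharP k p := charP_of_card_eq_prime_pow (p := p) (by rw [hcardk, hq, ← pow_mul])
  have : CharP l p := charP_of_injective_algebraMap (algebraMap k l).injective p
  let f := iterateFrobenius k p r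
  have hf : ⇑f = fun x => x ^ q := funext fun x => by rw [iterateFrobenius_def, hq]
  have hfinv : Function.Involutive f := fun x => by
    simp only [hf]
    rw [← pow_mul, ← sq, ← hcardk, FiniteField.pow_card]
  let F := iterateFrobenius l p (r * n)
  have hFf : ∀ c, F (algebraMap k l c) = algebraMap k l (f c) := fun c => by
    have hqn := congrFun ((pow_iterate q n).symm.trans ((hf ▸ hfinv).iterate_odd hn)) c
    rw [iterateFrobenius_def, pow_mul, ← hq, ← map_pow, hqn, hf]
  have hFα : F α = α⁻¹ := by rw [iterateFrobenius_def, pow_mul, ← hq, hα]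
  have hW : Nat.card (twistedCongrFixed f (leftMulMatrix b α)) = q ^ n * q ^ n := by
    rw [card_twistedCongrFixed_leftMulMatrix hfinv hFf b hα0 hFα hgen, Nat.card_eq_fintype_card,
      hcardl, ← pow_add, two_mul]
  have h2 : (2 : k) ≠ 0 :=
    Ring.two_ne_zero (by rw [ringChar.eq k p]; rintro rfl; exact (by decide : ¬Odd 2) hodd)
  have hq1 : 1 < q := (one_lt_pow_iff two_ne_zero).mp (hcardk ▸ Fintype.one_lt_card)
  obtain ⟨ξ, hξ⟩ := FiniteField.exists_pow_ne_self (K := k) hq1 (by rw [hcardk]; nlinarith)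
  obtain ⟨ω, hω, hfω⟩ := RingHom.exists_ne_zero_map_eq_neg hfinv (ξ := ξ) (by rwa [hf])
  have key := card_eigenset_sq_eq_card (twistedCongrFixed.conjTranspose (leftMulMatrix b α) hfinv)
    (twistedCongrFixed.conjTranspose_involutive _ hfinv) h2 hω hfω hε
  rw [hW, sq] at key
  rw [← hf, ← Nat.mul_self_inj.mp key]
  exact Nat.card_congr ((Equiv.subtypeSubtypeEquivSubtypeInter _ _).symm.trans
    (Equiv.subtypeEquivRight fun X => by rw [Subtype.ext_iff]; rfl))

/-- With `q = p^r` (`p` odd prime), `n` odd, `k = 𝔽_{q²}`, `l = 𝔽_{q^{2n}}`, `m_α` the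
multiplication matrix of `α` in a fixed `k`-basis of `l`, where `l = k(α)` and
`α^{q^n} = α⁻¹`: for each `ε = ±1` the set
`Ξ_ε(α) = {X ∈ M_n(k) | m_α·X·ᵗ(m̄_α) = X, ᵗX̄ = ε·X}` has exactly `q^n` elements. -/
theorem card_Xi_eps (p r q n : ℕ) (hp : p.Prime) (hodd : Odd p) (hr : 0 < r)
    (hq : q = p ^ r) (hn : Odd n) (hn0 : 0 < n)
    (k l : Type*) [Field k] [Fintype k] [Field l] [Fintype l] [Algebra k l]
    (hcardk : Fintype.card k = q ^ 2) (hcardl : Fintype.card l = q ^ (2 * n))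
    (hdeg : Module.finrank k l = n)
    (b : Module.Basis (Fin n) k l)
    (α : l) (hα0 : α ≠ 0) (hgen : Algebra.adjoin k {α} = ⊤)
    (hα : α ^ q ^ n = α⁻¹) :
    ∀ ε : k, ε = 1 ∨ ε = -1 →
      Nat.card {X : Matrix (Fin n) (Fin n) k |
          LinearMap.toMatrix b b (LinearMap.mulLeft k α) * X *
            ((LinearMap.toMatrix b b (LinearMap.mulLeft k α)).map (fun x => x ^ q))ᵀ = X ∧
          (X.map (fun x => x ^ q))ᵀ = ε • X}
        = q ^ n :=
  card_Xi_eps_general p r q n hp hodd hq hn k l hcardk hcardl b α hα0 hgen hα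
end

section
/- Let k be a field and l a field extension of k of finite degree n. Let ρ₁, ρ₂ : l → M_n(k) be two k-algebra homomorphisms. Then the set {X ∈ M_n(k) : X·ρ₂(β) = ρ₁(β)·X for all β ∈ l} is a k-subspace of M_n(k) of dimension n over k. In particular, if k is a finite field with |k| = Q elements, this set has exactly Q^n elements. -/
/-!
A nonzero vector `v` is cyclic for `ρ₂`: `β ↦ ρ₂ β *ᵥ v` is injective since `ρ₂ β` is invertible
for `β ≠ 0`, hence a `k`-linear bijection `l ≃ kⁿ` by counting dimensions. An intertwiner `X` is
therefore determined by `u = X *ᵥ v`, and every `u` occurs, via `X (ρ₂ γ *ᵥ v) := ρ₁ γ *ᵥ u`.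
So evaluation at `v` is a linear isomorphism from the intertwiners onto `kⁿ`.
-/

open Matrix Module

namespace Matrix

variable {k l ι : Type*} [Field k] [Field l] [Algebra k l] [Fintype ι] [DecidableEq ι]

def orbitMap (ρ : l →ₐ[k] Matrix ι ι k) (v : ι → k) : l →ₗ[k] ι → k :=
  (mulVecBilin k k).flip v ∘ₗ ρ.toLinearMap

@[simp]
lemma orbitMap_apply (ρ : l →ₐ[k] Matrix ι ι k) (v : ι → k) (β : l) :
    orbitMap ρ v β = ρ β *ᵥ v := rfl

lemma orbitMap_one (ρ : l →ₐ[k] Matrix ι ι k) (v : ι → k) : orbitMap ρ v 1 = v := by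
  rw [orbitMap_apply, map_one, one_mulVec]

lemma orbitMap_mul (ρ : l →ₐ[k] Matrix ι ι k) (v : ι → k) (β γ : l) :
    orbitMap ρ v (β * γ) = ρ β *ᵥ orbitMap ρ v γ := by
  rw [orbitMap_apply, orbitMap_apply, map_mul, mulVec_mulVec]

lemma orbitMap_injective (ρ : l →ₐ[k] Matrix ι ι k) {v : ι → k} (hv : v ≠ 0) :
    Function.Injective (orbitMap ρ v) := by
  rw [← LinearMap.ker_eq_bot, LinearMap.ker_eq_bot']
  intro β hβ
  by_contra hβ0
  apply hv
  calc v = orbitMap ρ v (β⁻¹ * β) := by rw [inv_mul_cancel₀ hβ0, orbitMap_one]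
    _ = 0 := by rw [orbitMap_mul, hβ, mulVec_zero]

lemma orbitMap_bijective (ρ : l →ₐ[k] Matrix ι ι k)
    (hdeg : finrank k l = Fintype.card ι) {v : ι → k} (hv : v ≠ 0) :
    Function.Bijective (orbitMap ρ v) := by
  have hinj := orbitMap_injective ρ hv
  have : FiniteDimensional k l := .of_injective _ hinj
  refine ⟨hinj, (LinearMap.injective_iff_surjective_of_finrank_eq_finrank ?_).1 hinj⟩
  rw [hdeg, finrank_pi]

def intertwiners (ρ₁ ρ₂ : l →ₐ[k] Matrix ι ι k) : Submodule k (Matrix ι ι k) where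
  carrier := {X | ∀ β : l, X * ρ₂ β = ρ₁ β * X}
  add_mem' ha hb β := by rw [add_mul, mul_add, ha β, hb β]
  zero_mem' β := by rw [zero_mul, mul_zero]
  smul_mem' c X hX β := by rw [Matrix.smul_mul, Matrix.mul_smul, hX β]

variable {ρ₁ ρ₂ : l →ₐ[k] Matrix ι ι k}

lemma mulVec_orbitMap_of_mem_intertwiners {X : Matrix ι ι k}
    (hX : X ∈ intertwiners ρ₁ ρ₂) (v : ι → k) (β : l) :
    X *ᵥ orbitMap ρ₂ v β = orbitMap ρ₁ (X *ᵥ v) β := by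
  rw [orbitMap_apply, orbitMap_apply, mulVec_mulVec, hX β, mulVec_mulVec]

lemma mem_intertwiners_of_mulVec_orbitMap {v u : ι → k}
    (hv : Function.Surjective (orbitMap ρ₂ v)) {X : Matrix ι ι k}
    (hX : ∀ γ, X *ᵥ orbitMap ρ₂ v γ = orbitMap ρ₁ u γ) : X ∈ intertwiners ρ₁ ρ₂ := by
  intro β
  rw [ext_iff_mulVec]
  intro w
  obtain ⟨γ, rfl⟩ := hv w
  rw [← mulVec_mulVec, ← mulVec_mulVec, ← orbitMap_mul, hX, hX, orbitMap_mul]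

def intertwinersEval (ρ₁ ρ₂ : l →ₐ[k] Matrix ι ι k) (v : ι → k) :
    intertwiners ρ₁ ρ₂ →ₗ[k] ι → k :=
  (mulVecBilin k k).flip v ∘ₗ (intertwiners ρ₁ ρ₂).subtype

@[simp]
lemma intertwinersEval_apply (v : ι → k) (X : intertwiners ρ₁ ρ₂) :
    intertwinersEval ρ₁ ρ₂ v X = (X : Matrix ι ι k) *ᵥ v := rfl

lemma intertwinersEval_injective {v : ι → k}
    (hv : Function.Surjective (orbitMap ρ₂ v)) :
    Function.Injective (intertwinersEval ρ₁ ρ₂ v) := by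
  rw [← LinearMap.ker_eq_bot, LinearMap.ker_eq_bot']
  rintro ⟨X, hX⟩ hXv
  rw [intertwinersEval_apply] at hXv
  rw [Submodule.mk_eq_zero, ext_iff_mulVec]
  intro w
  obtain ⟨γ, rfl⟩ := hv w
  rw [mulVec_orbitMap_of_mem_intertwiners hX, hXv, orbitMap_apply, mulVec_zero, zero_mulVec]

lemma intertwinersEval_surjective {v : ι → k}
    (hv : Function.Bijective (orbitMap ρ₂ v)) :
    Function.Surjective (intertwinersEval ρ₁ ρ₂ v) := by
  intro u
  let e := LinearEquiv.ofBijective _ hv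
  let X := LinearMap.toMatrix' (orbitMap ρ₁ u ∘ₗ e.symm.toLinearMap)
  have hX (γ : l) : X *ᵥ orbitMap ρ₂ v γ = orbitMap ρ₁ u γ := by
    rw [← toLin'_apply, toLin'_toMatrix', LinearMap.comp_apply, LinearEquiv.coe_coe]
    exact congrArg _ (e.symm_apply_apply γ)
  refine ⟨⟨X, mem_intertwiners_of_mulVec_orbitMap hv.2 hX⟩, ?_⟩
  have hXv := hX 1
  rwa [orbitMap_one, orbitMap_one] at hXv

theorem finrank_intertwiners (hdeg : finrank k l = Fintype.card ι) :
    finrank k (intertwiners ρ₁ ρ₂) = Fintype.card ι := by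
  cases isEmpty_or_nonempty ι with
  | inl _ => rw [Fintype.card_eq_zero, finrank_zero_of_subsingleton]
  | inr hι =>
    obtain ⟨i⟩ := hι
    have hv : Function.Bijective (orbitMap ρ₂ (Pi.single i (1 : k))) :=
      orbitMap_bijective ρ₂ hdeg (Pi.single_ne_zero_iff.2 one_ne_zero)
    let e := LinearEquiv.ofBijective (intertwinersEval ρ₁ ρ₂ _)
      ⟨intertwinersEval_injective hv.2, intertwinersEval_surjective hv⟩
    rw [e.finrank_eq, finrank_pi]

end Matrix

/-- Let `l/k` be a field extension of degree `n` and `ρ₁, ρ₂ : l → M_n(k)` two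
`k`-algebra homomorphisms.  The space of intertwiners
`{X | X·ρ₂(β) = ρ₁(β)·X for all β}` is a `k`-subspace of `M_n(k)` of dimension `n`;
in particular, over a finite field with `Q` elements it has exactly `Q^n` elements. -/
theorem intertwiner_space_dim (k l : Type*) [Field k] [Field l] [Algebra k l]
    (n : ℕ) (hdeg : Module.finrank k l = n)
    (ρ₁ ρ₂ : l →ₐ[k] Matrix (Fin n) (Fin n) k) :
    (∃ W : Submodule k (Matrix (Fin n) (Fin n) k),
        (W : Set (Matrix (Fin n) (Fin n) k)) = {X | ∀ β : l, X * ρ₂ β = ρ₁ β * X} ∧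
        Module.finrank k W = n) ∧
    (Finite k →
      Nat.card {X : Matrix (Fin n) (Fin n) k | ∀ β : l, X * ρ₂ β = ρ₁ β * X}
        = Nat.card k ^ n) := by
  have hrank : finrank k (intertwiners ρ₁ ρ₂) = n := by
    rw [finrank_intertwiners (by rw [hdeg, Fintype.card_fin]), Fintype.card_fin]
  refine ⟨⟨intertwiners ρ₁ ρ₂, rfl, hrank⟩, fun _ => ?_⟩
  have hcard := natCard_eq_pow_finrank (K := k) (V := intertwiners ρ₁ ρ₂)
  rwa [hrank] at hcard
end

section
/- Let G be a group and H a subgroup of G. Let A, B, C be subgroups of G contained in H such that H = A·B·C as sets (every element of H is a product a·b·c with a ∈ A, b ∈ B, c ∈ C). Let w₀, w₁ ∈ G satisfy w₀·A·w₀^{-1} ⊆ C, w₀·B·w₀^{-1} = B, and w₁^{-1}·C·w₁ ⊆ A. Then, as subsets of G, H·w₀·H·w₁·H = H·(w₀w₁)·H. -/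
open scoped Pointwise

/-!
Write `h = a b c` with `a ∈ A`, `b ∈ B`, `c ∈ C`; then
`w₀ h w₁ = (w₀ a w₀⁻¹) (w₀ b w₀⁻¹) (w₀ w₁) (w₁⁻¹ c w₁) ∈ C B (w₀ w₁) A ⊆ H (w₀ w₁) H`,
so `w₀ H w₁ ⊆ H (w₀ w₁) H`, and absorbing the outer copies of `H` gives the claim.
The reverse inclusion only needs `1 ∈ H`.
-/

namespace Subgroup

variable {G : Type*} [Group G]

theorem coe_mul_mul_coe_subset_of_subset {H : Subgroup G} {S T : Set G}
    (hST : S ⊆ (H : Set G) * T * H) : (H : Set G) * S * H ⊆ (H : Set G) * T * H :=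
  calc (H : Set G) * S * H ⊆ H * (H * T * H) * H := by gcongr
    _ = H * T * H := by
      have hHH : (H : Set G) * H = H := H.toSubmonoid.coe_mul_self_eq
      rw [← mul_assoc, ← mul_assoc, hHH, mul_assoc _ (H : Set G) H, hHH]

theorem singleton_mul_coe_mul_singleton_subset {H A B C : Subgroup G}
    (hfact : (H : Set G) ⊆ (A : Set G) * (B : Set G) * (C : Set G)) {w₀ w₁ : G}
    (h0A : ∀ a ∈ A, w₀ * a * w₀⁻¹ ∈ H) (h0B : ∀ b ∈ B, w₀ * b * w₀⁻¹ ∈ H)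
    (h1C : ∀ c ∈ C, w₁⁻¹ * c * w₁ ∈ H) :
    {w₀} * (H : Set G) * {w₁} ⊆ (H : Set G) * {w₀ * w₁} * H := by
  rintro _ ⟨_, ⟨_, rfl, h, hh, rfl⟩, _, rfl, rfl⟩
  obtain ⟨_, ⟨a, ha, b, hb, rfl⟩, c, hc, rfl⟩ := hfact hh
  refine ⟨_, ⟨_, mul_mem (h0A a ha) (h0B b hb), _, rfl, rfl⟩, _, h1C c hc, ?_⟩
  group

end Subgroup

/-- If a subgroup `H` of `G` has an Iwahori-type factorization `H = A·B·C` into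
subgroups, and `w₀, w₁ ∈ G` satisfy `w₀ A w₀⁻¹ ⊆ C`, `w₀ B w₀⁻¹ = B` and
`w₁⁻¹ C w₁ ⊆ A`, then `H w₀ H w₁ H = H (w₀w₁) H` as subsets of `G`. -/
theorem double_coset_product {G : Type*} [Group G] (H A B C : Subgroup G)
    (hA : A ≤ H) (hB : B ≤ H) (hC : C ≤ H)
    (hfact : (H : Set G) = (A : Set G) * (B : Set G) * (C : Set G))
    (w₀ w₁ : G)
    (h0A : ∀ a ∈ A, w₀ * a * w₀⁻¹ ∈ C)
    (h0B : (fun b => w₀ * b * w₀⁻¹) '' (B : Set G) = (B : Set G))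
    (h1C : ∀ c ∈ C, w₁⁻¹ * c * w₁ ∈ A) :
    (H : Set G) * {w₀} * (H : Set G) * {w₁} * (H : Set G)
      = (H : Set G) * {w₀ * w₁} * (H : Set G) := by
  have hmiddle : {w₀} * (H : Set G) * {w₁} ⊆ (H : Set G) * {w₀ * w₁} * H :=
    Subgroup.singleton_mul_coe_mul_singleton_subset hfact.subset (fun a ha => hC (h0A a ha))
      (fun b hb => hB (h0B.subset ⟨b, hb, rfl⟩)) (fun c hc => hA (h1C c hc))
  have hprod : ({w₀ * w₁} : Set G) ⊆ {w₀} * (H : Set G) * {w₁} :=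
    Set.singleton_subset_iff.mpr ⟨w₀, ⟨w₀, rfl, 1, H.one_mem, mul_one w₀⟩, w₁, rfl, rfl⟩
  have hassoc : (H : Set G) * {w₀} * (H : Set G) * {w₁} * (H : Set G)
      = (H : Set G) * ({w₀} * (H : Set G) * {w₁}) * H := by
    simp only [mul_assoc]
  rw [hassoc]
  exact (Subgroup.coe_mul_mul_coe_subset_of_subset hmiddle).antisymm (by gcongr)
end
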